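/- arXiv:math/0612171 — 7 statements merged into one kernel-verified Lean document; each statement's English description precedes it below -/
import Mathlib

section
/- Let χ be a weight of the diagonal torus of SL_{m+n}(ℝ) occurring in a subspace of H-fixed vectors of a representation without nonzero G-fixed vectors, where the values χ(F_{ij}) ≥ 0 for all (i,j) with 1 ≤ i ≤ m < j ≤ m+n and χ(F_{i₀j₀}) > 0 for some (i₀,j₀). Then for every t ∈ 𝔞⁺, χ(t) ≥ ⌊t⌋ · χ(F_{i₀j₀}), where ⌊t⌋ = min_i t_i. -/
/-- The coroot `F_{ij} = E_{ii} − E_{jj}` (for `1 ≤ i ≤ m < j ≤ m+n`), viewed as the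
diagonal vector `e_{inl i} − e_{inr j}` in the Cartan subalgebra of diagonal matrices,
coordinatized by `Fin m ⊕ Fin n → ℝ`. -/
noncomputable def Fcoroot (m n : ℕ) (i : Fin m) (j : Fin n) : Fin m ⊕ Fin n → ℝ :=
  Pi.single (Sum.inl i) 1 - Pi.single (Sum.inr j) 1

/-- The diagonal (Lie algebra) element corresponding to `t ∈ 𝔞⁺`:
`diag(t₁, …, t_m, −t_{m+1}, …, −t_{m+n})`. -/
def diagOf (m n : ℕ) (t : Fin m ⊕ Fin n → ℝ) : Fin m ⊕ Fin n → ℝ :=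
  Sum.elim (fun i => t (Sum.inl i)) (fun j => -(t (Sum.inr j)))

/-- If a weight `χ` of the diagonal torus satisfies `χ(F_{ij}) ≥ 0` for all
`1 ≤ i ≤ m < j ≤ m+n` and `χ(F_{i₀j₀}) > 0` for some `(i₀, j₀)`, then
`χ(t) ≥ ⌊t⌋ · χ(F_{i₀j₀})` for every `t ∈ 𝔞⁺`, where `⌊t⌋ = min_k t_k`. -/
theorem weight_lower_bound (m n : ℕ) (hm : 0 < m) (hn : 0 < n)
    (χ : ((Fin m ⊕ Fin n) → ℝ) →ₗ[ℝ] ℝ)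
    (hnn : ∀ (i : Fin m) (j : Fin n), 0 ≤ χ (Fcoroot m n i j))
    (i₀ : Fin m) (j₀ : Fin n) (hpos : 0 < χ (Fcoroot m n i₀ j₀)) :
    ∀ t : Fin m ⊕ Fin n → ℝ, (∀ k, 0 < t k) →
      (∑ i : Fin m, t (Sum.inl i) = ∑ j : Fin n, t (Sum.inr j)) →
      (⨅ k, t k) * χ (Fcoroot m n i₀ j₀) ≤ χ (diagOf m n t) := by

  intro t htpos hsum
  have : Nonempty (Fin m) := ⟨⟨0, hm⟩⟩
  have : Nonempty (Fin n) := ⟨⟨0, hn⟩⟩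
  set a : Fin m → ℝ := fun i => χ (Pi.single (Sum.inl i) 1) with ha
  set b : Fin n → ℝ := fun j => χ (Pi.single (Sum.inr j) 1) with hb
  have hF : ∀ i j, χ (Fcoroot m n i j) = a i - b j := by
    intro i j; simp [Fcoroot, ha, hb, map_sub]
  have hab : ∀ i j, b j ≤ a i := by
    intro i j; have := hnn i j; rw [hF] at this; linarith
  -- decompose diagOf t
  have hdiagv : diagOf m n t = (∑ i, t (Sum.inl i) • (Pi.single (Sum.inl i) 1 : Fin m ⊕ Fin n → ℝ)) +
      (∑ j, (-(t (Sum.inr j))) • (Pi.single (Sum.inr j) 1 : Fin m ⊕ Fin n → ℝ)) := by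
    funext k
    rcases k with i | j <;>
      simp [diagOf, Finset.sum_apply, Pi.single_apply, Finset.sum_ite_eq', mul_comm]
  have hχdiag : χ (diagOf m n t) = (∑ i, t (Sum.inl i) * a i) - (∑ j, t (Sum.inr j) * b j) := by
    rw [hdiagv, map_add, map_sum, map_sum]
    simp [ha, hb, sub_eq_add_neg, ← Finset.sum_neg_distrib]
  set c : ℝ := ⨅ k, t k with hc
  have hc_le : ∀ k, c ≤ t k := fun k => ciInf_le (Finite.bddBelow_range t) k
  set B : ℝ := ⨆ j, b j with hB
  have hbB : ∀ j, b j ≤ B := fun j => le_ciSup (Finite.bddAbove_range b) j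
  have haB : ∀ i, B ≤ a i := fun i => ciSup_le (fun j => hab i j)
  set s : Fin m → ℝ := fun i => t (Sum.inl i) - (if i = i₀ then c else 0) with hs
  set u : Fin n → ℝ := fun j => t (Sum.inr j) - (if j = j₀ then c else 0) with hu
  have hs0 : ∀ i, 0 ≤ s i := by
    intro i; simp only [hs]
    split
    · have := hc_le (Sum.inl i); linarith
    · have := (htpos (Sum.inl i)).le; linarith
  have hu0 : ∀ j, 0 ≤ u j := by
    intro j; simp only [hu]
    split
    · have := hc_le (Sum.inr j); linarith
    · have := (htpos (Sum.inr j)).le; linarith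
  have hsumS : ∑ i, s i = (∑ i, t (Sum.inl i)) - c := by
    simp [hs, Finset.sum_sub_distrib, Finset.sum_ite_eq']
  have hsumU : ∑ j, u j = (∑ j, t (Sum.inr j)) - c := by
    simp [hu, Finset.sum_sub_distrib, Finset.sum_ite_eq']
  have e1 : ∑ i, s i * a i = (∑ i, t (Sum.inl i) * a i) - c * a i₀ := by
    simp [hs, sub_mul, Finset.sum_sub_distrib, Finset.sum_ite_eq', ite_mul]
  have e2 : ∑ j, u j * b j = (∑ j, t (Sum.inr j) * b j) - c * b j₀ := by
    simp [hu, sub_mul, Finset.sum_sub_distrib, Finset.sum_ite_eq', ite_mul]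
  have key1 : (∑ i, s i) * B ≤ ∑ i, s i * a i := by
    rw [Finset.sum_mul]
    exact Finset.sum_le_sum fun i _ => mul_le_mul_of_nonneg_left (haB i) (hs0 i)
  have key2 : ∑ j, u j * b j ≤ (∑ j, u j) * B := by
    rw [Finset.sum_mul]
    exact Finset.sum_le_sum fun j _ => mul_le_mul_of_nonneg_left (hbB j) (hu0 j)
  have hSU : (∑ i, s i) = (∑ j, u j) := by rw [hsumS, hsumU, hsum]
  rw [hχdiag, hF]
  rw [hSU] at key1
  linarith
end

section
/- Every element t of the closure of 𝔞⁺ = {t ∈ ℝ^{m+n} : t_i > 0 for all i, ∑_{i=1}^m t_i = ∑_{j=m+1}^{m+n} t_j} can be written as a linear combination with nonnegative coefficients of the vectors F_{ij} = e_i − e_j for 1 ≤ i ≤ m < j ≤ m+n, where e_k is the k-th standard basis vector. Moreover, if ⌊t⌋ = min_k t_k, then t − ⌊t⌋·F_{i₀j₀} lies in the closure of 𝔞⁺ for appropriate i₀ ≤ m < j₀ (indices where t attains values ≥ ⌊t⌋). -/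
/-- **Cone decomposition**: every `t` in the closure of
`𝔞⁺ = {t : all tᵢ > 0, ∑_{i ≤ m} tᵢ = ∑_{j > m} tⱼ}` (as a diagonal matrix) is a
nonnegative linear combination of the coroots `F_{ij}`, `i ≤ m < j`; moreover, for any
`i₀ ≤ m < j₀`, subtracting `⌊t⌋·F_{i₀j₀}` (where `⌊t⌋ = min_k t_k`) leaves one inside
the closure of `𝔞⁺`. -/
theorem aplus_cone_decomposition (m n : ℕ) (hm : 0 < m) (hn : 0 < n)
    (t : Fin m ⊕ Fin n → ℝ) (ht : ∀ k, 0 ≤ t k)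
    (hsum : ∑ i : Fin m, t (Sum.inl i) = ∑ j : Fin n, t (Sum.inr j)) :
    (∃ c : Fin m → Fin n → ℝ, (∀ i j, 0 ≤ c i j) ∧
      diagOf m n t = ∑ i : Fin m, ∑ j : Fin n, c i j • Fcoroot m n i j) ∧
    (∀ (i₀ : Fin m) (j₀ : Fin n),
      ∃ t' : Fin m ⊕ Fin n → ℝ, (∀ k, 0 ≤ t' k) ∧
        (∑ i : Fin m, t' (Sum.inl i) = ∑ j : Fin n, t' (Sum.inr j)) ∧
        diagOf m n t - (⨅ k, t k) • Fcoroot m n i₀ j₀ = diagOf m n t') := by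
  have hFin : Nonempty (Fin m ⊕ Fin n) := ⟨Sum.inl ⟨0, hm⟩⟩
  set S : ℝ := ∑ i : Fin m, t (Sum.inl i) with hS
  have hS0 : 0 ≤ S := Finset.sum_nonneg fun i _ => ht _
  constructor
  · rcases eq_or_lt_of_le hS0 with hSz | hSpos
    · -- S = 0, so t = 0
      have h1 : ∀ i : Fin m, t (Sum.inl i) = 0 := by
        intro i
        have := (Finset.sum_eq_zero_iff_of_nonneg (fun i _ => ht (Sum.inl i))).mp hSz.symm
        exact this i (Finset.mem_univ i)
      have h2 : ∀ j : Fin n, t (Sum.inr j) = 0 := by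
        intro j
        have hz : ∑ j : Fin n, t (Sum.inr j) = 0 := by rw [← hsum]; exact hSz.symm
        exact (Finset.sum_eq_zero_iff_of_nonneg (fun j _ => ht (Sum.inr j))).mp hz j
          (Finset.mem_univ j)
      refine ⟨0, fun i j => le_refl 0, ?_⟩
      funext k
      simp only [Finset.sum_apply, Pi.smul_apply, Pi.zero_apply, zero_smul,
        Finset.sum_const_zero]
      cases k with
      | inl i => simp [diagOf, h1 i]
      | inr j => simp [diagOf, h2 j]
    · refine ⟨fun i j => t (Sum.inl i) * t (Sum.inr j) / S, fun i j =>
        div_nonneg (mul_nonneg (ht _) (ht _)) hS0, ?_⟩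
      funext k
      simp only [Finset.sum_apply, Pi.smul_apply, Fcoroot, Pi.sub_apply, smul_eq_mul]
      cases k with
      | inl i =>
        have : ∀ i' : Fin m, ∑ j : Fin n,
            t (Sum.inl i') * t (Sum.inr j) / S *
            ((Pi.single (Sum.inl i') 1 : Fin m ⊕ Fin n → ℝ) (Sum.inl i) - (Pi.single (Sum.inr j) 1 : Fin m ⊕ Fin n → ℝ) (Sum.inl i))
            = (if i' = i then t (Sum.inl i) else 0) := by
          intro i'
          rcases eq_or_ne i' i with rfl | hne
          · simp only [Pi.single_apply, if_pos rfl, reduceCtorEq, if_false, sub_zero,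
              mul_one, if_pos rfl, if_true]
            rw [← Finset.sum_div, ← Finset.mul_sum, ← hsum]
            field_simp
          · simp only [Pi.single_apply, Sum.inl.injEq, reduceCtorEq, if_false, hne,
              sub_zero, mul_zero, Finset.sum_const_zero, if_neg hne]
            simp [if_neg (fun h : i = i' => hne h.symm)]
      
        rw [Finset.sum_congr rfl fun i' _ => this i']
        simp [diagOf]
      | inr j =>
        have : ∀ i' : Fin m, ∑ j' : Fin n,
            t (Sum.inl i') * t (Sum.inr j') / S *
            ((Pi.single (Sum.inl i') 1 : Fin m ⊕ Fin n → ℝ) (Sum.inr j) - (Pi.single (Sum.inr j') 1 : Fin m ⊕ Fin n → ℝ) (Sum.inr j))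
            = -(t (Sum.inl i') * t (Sum.inr j) / S) := by
          intro i'
          rw [Finset.sum_eq_single j]
          · simp [Pi.single_apply]
          · intro j' _ hne
            simp [Pi.single_apply, hne]
          · simp
        rw [Finset.sum_congr rfl fun i' _ => this i']
        rw [Finset.sum_neg_distrib]
        congr 1
        simp only [div_eq_mul_inv]
        rw [← Finset.sum_mul, ← Finset.sum_mul, ← hS]
        simp [diagOf]
        field_simp
  · intro i₀ j₀
    set μ : ℝ := ⨅ k, t k with hμ
    have hbdd : BddBelow (Set.range t) := Set.Finite.bddBelow (Set.finite_range t)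
    have hμle : ∀ k, μ ≤ t k := fun k => ciInf_le hbdd k
    have hμ0 : 0 ≤ μ := le_ciInf ht
    refine ⟨t - μ • (Pi.single (Sum.inl i₀) 1 + Pi.single (Sum.inr j₀) 1), ?_, ?_, ?_⟩
    · intro k
      simp only [Pi.sub_apply, Pi.smul_apply, Pi.add_apply, Pi.single_apply, smul_eq_mul,
        sub_nonneg]
      rcases eq_or_ne k (Sum.inl i₀) with rfl | h1
      · simp [hμle _]
      · rcases eq_or_ne k (Sum.inr j₀) with rfl | h2
        · simp [hμle _]
        · simp [h1, h2, ht k]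
    · simp only [Pi.sub_apply, Pi.smul_apply, Pi.add_apply, Pi.single_apply, smul_eq_mul]
      rw [Finset.sum_sub_distrib, Finset.sum_sub_distrib, ← hS, hsum]
      congr 1
      simp [Finset.mul_sum, Finset.sum_ite_eq', Sum.inl.injEq, Sum.inr.injEq]
    · funext k
      cases k with
      | inl i =>
        simp only [Pi.sub_apply, Pi.smul_apply, Fcoroot, diagOf, Sum.elim_inl,
          Pi.add_apply, Pi.single_apply, smul_eq_mul, Sum.inl.injEq, reduceCtorEq]
        rcases eq_or_ne i i₀ with rfl | h
        · simp
        · simp [h]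
      | inr j =>
        simp only [Pi.sub_apply, Pi.smul_apply, Fcoroot, diagOf, Sum.elim_inr,
          Pi.add_apply, Pi.single_apply, smul_eq_mul, Sum.inr.injEq, reduceCtorEq]
        rcases eq_or_ne j j₀ with rfl | h
        · simp; ring
        · simp [h]
end

section
/- Suppose w ∈ ⋀^j(ℤ^{n+1}), 1 ≤ j ≤ n, has a nonzero coordinate w_J for some J ⊂ {1,…,n} (i.e. J not containing 0). Then for any t ∈ 𝔞⁺ there exists a subset I ⊆ {0,…,n} such that in the affine expression ⟨g_t τ(y) w, e_I⟩ = c₀ + ∑ c_i y_i, some coefficient satisfies |c_i| ≥ e^{‖t‖/n}. -/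
/-- `g_t = diag(e^{t₀}, e^{−t₁}, …, e^{−t_n})`. -/
noncomputable def gDiag (n : ℕ) (t : Fin (n + 1) → ℝ) :
    Matrix (Fin (n + 1)) (Fin (n + 1)) ℝ :=
  Matrix.diagonal fun i => if i = 0 then Real.exp (t 0) else Real.exp (-(t i))

/-- `τ(y)`: the unipotent matrix fixing `e₀` and sending `eᵢ ↦ eᵢ + yᵢ e₀`. -/
def tauMat (n : ℕ) (y : Fin n → ℝ) : Matrix (Fin (n + 1)) (Fin (n + 1)) ℝ :=
  Matrix.of fun i k =>
    if i = k then 1 else if i = 0 then (Fin.cases 0 (fun j => y j) k : ℝ) else 0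

/-- The coordinate `⟨v₁ ∧ ⋯ ∧ v_j, e_I⟩` of a wedge of vectors `v_a : Fin (n+1) → ℝ`,
computed (up to sign) as the `j × j` minor with columns indexed by `I` in increasing
order. -/
noncomputable def wedgeCoord (n j : ℕ) (v : Fin j → Fin (n + 1) → ℝ)
    (I : Finset (Fin (n + 1))) (hI : I.card = j) : ℝ :=
  Matrix.det (Matrix.of fun a b => v a ((I.orderIsoOfFin hI b : I) : Fin (n + 1)))

lemma gtau_mulVec (n : ℕ) (t : Fin (n + 1) → ℝ) (y : Fin n → ℝ) (x : Fin (n + 1) → ℝ)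
    (i : Fin (n + 1)) :
    (gDiag n t * tauMat n y).mulVec x i =
      if i = 0 then Real.exp (t 0) * (x 0 + ∑ k : Fin n, y k * x k.succ)
      else Real.exp (-(t i)) * x i := by
  have h1 : (tauMat n y).mulVec x i
      = if i = 0 then x 0 + ∑ k : Fin n, y k * x k.succ else x i := by
    by_cases hi : i = 0
    · subst hi
      simp only [tauMat, Matrix.mulVec, dotProduct, Matrix.of_apply, if_pos rfl]
      rw [Fin.sum_univ_succ]
      simp only [if_true, one_mul]
      refine congrArg (fun z => x 0 + z) (Finset.sum_congr rfl fun k _ => ?_)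
      rw [if_neg (Fin.succ_ne_zero k).symm, Fin.cases_succ]
    · simp [tauMat, Matrix.mulVec, dotProduct, hi, ite_mul, Finset.sum_ite_eq]
  rw [← Matrix.mulVec_mulVec]
  unfold gDiag
  rw [Matrix.mulVec_diagonal, h1]
  by_cases hi : i = 0 <;> simp [hi]

lemma det_updateCol_sum' {j : ℕ} (N : Matrix (Fin j) (Fin j) ℝ) (b0 : Fin j)
    {ι : Type*} (s : Finset ι) (f : ι → Fin j → ℝ) :
    (N.updateCol b0 (fun a => ∑ m ∈ s, f m a)).det
      = ∑ m ∈ s, (N.updateCol b0 (f m)).det := by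
  classical
  induction s using Finset.induction_on with
  | empty =>
      simp only [Finset.sum_empty]
      exact Matrix.det_eq_zero_of_column_eq_zero b0 fun a => by
        simp [Matrix.updateCol_apply]
  | @insert aa s h ih =>
      have hcol : (fun a => ∑ m ∈ insert aa s, f m a)
          = (f aa + fun a => ∑ m ∈ s, f m a) := by
        funext a; simp [Finset.sum_insert h]
      rw [hcol, Matrix.det_updateCol_add, ih, Finset.sum_insert h]

/-- **Lemma 3.5 of Kleinbock–Weiss**: if `w = v₁ ∧ ⋯ ∧ v_j ∈ ⋀^j(ℤ^{n+1})`,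
`1 ≤ j ≤ n`, has a nonzero coordinate `w_J` for some `J ⊂ {1, …, n}` (not containing
`0`), then for any `t ∈ 𝔞⁺` there is a subset `I` such that in the affine expression
`⟨g_t τ(y) w, e_I⟩ = c₀ + ∑ᵢ cᵢ yᵢ` some coefficient satisfies `|cₖ| ≥ e^{‖t‖/n}`. -/
theorem big_coefficient (n j : ℕ) (hj : 1 ≤ j) (hjn : j ≤ n)
    (v : Fin j → Fin (n + 1) → ℤ) (J : Finset (Fin (n + 1))) (hJ : J.card = j)
    (hJ0 : (0 : Fin (n + 1)) ∉ J)
    (hwJ : wedgeCoord n j (fun a i => (v a i : ℝ)) J hJ ≠ 0)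
    (t : Fin (n + 1) → ℝ) (hpos : ∀ i, 0 < t i) (hsum : t 0 = ∑ i : Fin n, t i.succ) :
    ∃ (I : Finset (Fin (n + 1))) (hI : I.card = j) (c : Fin (n + 1) → ℝ),
      (∀ y : Fin n → ℝ,
        wedgeCoord n j
          (fun a => (gDiag n t * tauMat n y).mulVec (fun i => (v a i : ℝ))) I hI
          = c 0 + ∑ i : Fin n, c i.succ * y i) ∧
      ∃ k : Fin (n + 1), Real.exp ((⨆ i, t i) / n) ≤ |c k| := by
  classical
  have hn : 0 < n := hj.trans hjn
  set V : Fin j → Fin (n + 1) → ℝ := fun a i => (v a i : ℝ) with hV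
  have hle : ∀ i, t i ≤ t 0 := by
    intro i
    refine Fin.cases le_rfl (fun i => ?_) i
    rw [hsum]
    exact Finset.single_le_sum (fun k _ => (hpos k.succ).le) (Finset.mem_univ i)
  have hsup : (⨆ i, t i) = t 0 :=
    le_antisymm (ciSup_le hle) (le_ciSup (Set.Finite.bddAbove (Set.finite_range t)) 0)
  have hJne : J.Nonempty := Finset.card_pos.mp (by omega)
  obtain ⟨r, hrJ, hrmax⟩ := J.exists_max_image t hJne
  have h0E : (0 : Fin (n + 1)) ∉ J.erase r := fun h => hJ0 (Finset.mem_of_mem_erase h)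
  have h0I : (0 : Fin (n + 1)) ∈ insert 0 (J.erase r) := Finset.mem_insert_self _ _
  have hI : (insert 0 (J.erase r)).card = j := by
    rw [Finset.card_insert_of_notMem h0E, Finset.card_erase_of_mem hrJ, hJ]
    omega
  set I : Finset (Fin (n + 1)) := insert 0 (J.erase r) with hIdef
  set cσ : Fin j → Fin (n + 1) := fun b => ((I.orderIsoOfFin hI b : I) : Fin (n + 1)) with hcσ
  have hcσap : ∀ b, ((I.orderIsoOfFin hI b : I) : Fin (n + 1)) = cσ b := fun _ => rfl
  have hcσinj : Function.Injective cσ := fun b b' h =>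
    (I.orderIsoOfFin hI).injective (Subtype.coe_injective h)
  have hcσI : ∀ b, cσ b ∈ I := fun b => (I.orderIsoOfFin hI b).2
  set b0 : Fin j := (I.orderIsoOfFin hI).symm ⟨0, h0I⟩ with hb0
  have hcσb0 : cσ b0 = 0 := by
    rw [hcσ, hb0]; simp
  have hcσne : ∀ b, b ≠ b0 → cσ b ∈ J.erase r := by
    intro b hb
    have h1 : cσ b ≠ 0 := by
      intro h
      apply hb
      have h2 : (I.orderIsoOfFin hI) b = ⟨0, h0I⟩ := Subtype.ext h
      rw [hb0, ← h2, OrderIso.symm_apply_apply]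
    rcases Finset.mem_insert.mp (hcσI b) with h | h
    · exact absurd h h1
    · exact h
  set N : Matrix (Fin j) (Fin j) ℝ :=
    Matrix.of fun a b => if b = b0 then 0 else Real.exp (-(t (cσ b))) * V a (cσ b) with hN
  set col : Fin (n + 1) → Fin j → ℝ := fun m a => Real.exp (t 0) * V a m with hcol
  refine ⟨I, hI, fun m => (N.updateCol b0 (col m)).det, ?_, ?_⟩
  · -- affine formula
    intro y
    unfold wedgeCoord
    have hmat : (Matrix.of fun a b =>
        (gDiag n t * tauMat n y).mulVec (fun i => V a i)
          ((I.orderIsoOfFin hI b : I) : Fin (n + 1)))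
        = N.updateCol b0
            (fun a => Real.exp (t 0) * (V a 0 + ∑ k : Fin n, y k * V a k.succ)) := by
      ext a b
      rw [Matrix.of_apply, hcσap, gtau_mulVec, Matrix.updateCol_apply]
      by_cases hb : b = b0
      · rw [if_pos hb, hb, hcσb0, if_pos rfl]
      · rw [if_neg hb, if_neg (fun h => hb (hcσinj (h.trans hcσb0.symm))), hN]
        simp [if_neg hb]
    rw [hmat]
    have hsumcol : (fun a => Real.exp (t 0) * (V a 0 + ∑ k : Fin n, y k * V a k.succ))
        = fun a => ∑ m : Fin (n + 1), (Fin.cases 1 y m : ℝ) * col m a := by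
      funext a
      rw [Fin.sum_univ_succ]
      simp only [Fin.cases_zero, Fin.cases_succ, hcol, one_mul]
      rw [mul_add, Finset.mul_sum]
      refine congrArg (fun z => _ + z) (Finset.sum_congr rfl fun k _ => by ring)
    rw [hsumcol,
      det_updateCol_sum' N b0 Finset.univ (fun m a => (Fin.cases 1 y m : ℝ) * col m a)]
    have hterm : ∀ m : Fin (n + 1),
        (N.updateCol b0 (fun a => (Fin.cases 1 y m : ℝ) * col m a)).det
          = (Fin.cases 1 y m : ℝ) * (N.updateCol b0 (col m)).det := fun m =>
      Matrix.det_updateCol_smul N b0 _ (col m)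
    rw [Finset.sum_congr rfl (fun m _ => hterm m), Fin.sum_univ_succ]
    simp only [Fin.cases_zero, Fin.cases_succ, one_mul]
    exact congrArg (fun z => _ + z) (Finset.sum_congr rfl fun k _ => mul_comm _ _)
  · -- the big coefficient at k = r
    refine ⟨r, ?_⟩
    set ρ : Fin j → Fin (n + 1) := fun b => if b = b0 then r else cσ b with hρ
    have hρJ : ∀ b, ρ b ∈ J := by
      intro b; by_cases hb : b = b0
      · simp only [hρ, if_pos hb]; exact hrJ
      · simp only [hρ, if_neg hb]; exact Finset.mem_of_mem_erase (hcσne b hb)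
    have hρinj : Function.Injective ρ := by
      intro b b' h
      by_cases hb : b = b0 <;> by_cases hb' : b' = b0
      · rw [hb, hb']
      · exfalso
        rw [hρ] at h; simp only [if_pos hb, if_neg hb'] at h
        exact (Finset.ne_of_mem_erase (hcσne b' hb')) h.symm
      · exfalso
        rw [hρ] at h; simp only [if_pos hb', if_neg hb] at h
        exact (Finset.ne_of_mem_erase (hcσne b hb)) h
      · rw [hρ] at h; simp only [if_neg hb, if_neg hb'] at h
        exact hcσinj h
    set eJ := J.orderIsoOfFin hJ with heJ
    set E : Fin j → Fin j := fun b => eJ.symm ⟨ρ b, hρJ b⟩ with hE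
    have hEinj : Function.Injective E := fun b b' h => hρinj (by
      have h2 := congrArg eJ h
      simp only [hE, OrderIso.apply_symm_apply] at h2
      exact congrArg Subtype.val h2)
    have hEbij : Function.Bijective E := Finite.injective_iff_bijective.mp hEinj
    have hM : N.updateCol b0 (col r)
        = Matrix.of (fun a b =>
            (if b = b0 then Real.exp (t 0) else Real.exp (-(t (cσ b)))) * V a (ρ b)) := by
      ext a b
      rw [Matrix.updateCol_apply, Matrix.of_apply]
      by_cases hb : b = b0
      · rw [if_pos hb, if_pos hb, hcol, hρ]
        simp [hb]
      · rw [if_neg hb, if_neg hb, hN, hρ]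
        simp [if_neg hb]
    have hdet : (N.updateCol b0 (col r)).det
        = (∏ b : Fin j, (if b = b0 then Real.exp (t 0) else Real.exp (-(t (cσ b)))))
          * (Matrix.of fun a b => V a (ρ b)).det := by
      rw [hM]
      have h3 := Matrix.det_mul_row
        (fun b => if b = b0 then Real.exp (t 0) else Real.exp (-(t (cσ b))))
        (Matrix.of fun a b => V a (ρ b))
      simpa using h3
    have hprod : (∏ b : Fin j, (if b = b0 then Real.exp (t 0) else Real.exp (-(t (cσ b)))))
        = Real.exp (t 0 - ∑ i ∈ J.erase r, t i) := by
      have h4 : ∀ b : Fin j, (if b = b0 then Real.exp (t 0) else Real.exp (-(t (cσ b))))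
          = Real.exp (if b = b0 then t 0 else -(t (cσ b))) := fun b =>
        (apply_ite Real.exp _ _ _).symm
      rw [Finset.prod_congr rfl (fun b _ => h4 b), ← Real.exp_sum]
      congr 1
      rw [← Finset.add_sum_erase _ _ (Finset.mem_univ b0), if_pos rfl,
        Finset.sum_congr rfl (fun b hb => if_neg (Finset.ne_of_mem_erase hb))]
      have hsum2 : ∑ b ∈ Finset.univ.erase b0, t (cσ b) = ∑ i ∈ J.erase r, t i := by
        refine Finset.sum_bij (fun b _ => cσ b) ?_ ?_ ?_ ?_
        · intro b hb; exact hcσne b (Finset.ne_of_mem_erase hb)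
        · intro b hb b' hb' h; exact hcσinj h
        · intro i hi
          have hiI : i ∈ I := Finset.mem_insert_of_mem hi
          refine ⟨(I.orderIsoOfFin hI).symm ⟨i, hiI⟩, ?_, ?_⟩
          · refine Finset.mem_erase.mpr ⟨?_, Finset.mem_univ _⟩
            intro h
            apply h0E
            have h2 : (⟨i, hiI⟩ : {x // x ∈ I}) = ⟨0, h0I⟩ := by
              rw [← OrderIso.apply_symm_apply (I.orderIsoOfFin hI) ⟨i, hiI⟩, h, hb0,
                OrderIso.apply_symm_apply]
            have h3 : i = (0 : Fin (n + 1)) := congrArg Subtype.val h2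
            rwa [← h3]
          · rw [hcσ]; simp
        · intro b hb; rfl
      rw [Finset.sum_neg_distrib, hsum2]
      ring
    have hsub : (Matrix.of fun a b => V a (ρ b))
        = (Matrix.of fun a b =>
            V a ((eJ b : J) : Fin (n + 1))).submatrix (Equiv.refl (Fin j))
            (Equiv.ofBijective E hEbij) := by
      ext a b
      simp only [Matrix.submatrix_apply, Matrix.of_apply, Equiv.ofBijective_apply,
        Equiv.refl_apply]
      rw [hE]
      simp only [OrderIso.apply_symm_apply]
    have hint : 1 ≤ |(Matrix.of fun a b => V a ((eJ b : J) : Fin (n + 1))).det| := by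
      have hcast : (Matrix.of fun a b => V a ((eJ b : J) : Fin (n + 1))).det
          = (((Matrix.of fun a b => v a ((eJ b : J) : Fin (n + 1))) :
              Matrix (Fin j) (Fin j) ℤ).det : ℝ) :=
        (RingHom.map_det (Int.castRingHom ℝ) _).symm
      have hA0 : ((Matrix.of fun a b => v a ((eJ b : J) : Fin (n + 1))) :
          Matrix (Fin j) (Fin j) ℤ).det ≠ 0 := by
        intro h
        apply hwJ
        unfold wedgeCoord
        rw [← heJ, hcast, h, Int.cast_zero]
      rw [hcast]
      exact_mod_cast Int.one_le_abs hA0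
    have habs : |(Matrix.of fun a b => V a (ρ b)).det|
        = |(Matrix.of fun a b => V a ((eJ b : J) : Fin (n + 1))).det| := by
      rw [hsub]
      exact Matrix.abs_det_submatrix_equiv_equiv _ _ _
    have hkey : t 0 / n ≤ t 0 - ∑ i ∈ J.erase r, t i := by
      obtain ⟨S', hS'⟩ : ∃ S', ∑ i ∈ J.erase r, t i = S' := ⟨_, rfl⟩
      rw [hS']
      have hS'tr : S' + t r ≤ t 0 := by
        have h1 : ∑ i ∈ J, t i ≤ ∑ i ∈ (Finset.univ : Finset (Fin (n + 1))).erase 0, t i := by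
          refine Finset.sum_le_sum_of_subset_of_nonneg ?_ (fun i _ _ => (hpos i).le)
          intro i hi
          exact Finset.mem_erase.mpr ⟨fun h => hJ0 (h ▸ hi), Finset.mem_univ i⟩
        have h2 : t 0 + ∑ i ∈ (Finset.univ : Finset (Fin (n + 1))).erase 0, t i
            = ∑ i : Fin (n + 1), t i :=
          Finset.add_sum_erase (Finset.univ : Finset (Fin (n + 1))) t (Finset.mem_univ 0)
        have h3 : ∑ i : Fin (n + 1), t i = t 0 + ∑ i : Fin n, t i.succ := Fin.sum_univ_succ t
        have h5 : ∑ i ∈ J, t i = S' + t r := by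
          rw [← Finset.add_sum_erase _ t hrJ, hS']
          exact add_comm _ _
        rw [h3, ← hsum] at h2
        linarith
      have hS'le : S' ≤ ((j : ℝ) - 1) * t r := by
        have h6 := Finset.sum_le_card_nsmul (J.erase r) t (t r)
          (fun i hi => hrmax i (Finset.mem_of_mem_erase hi))
        rw [Finset.card_erase_of_mem hrJ, hJ] at h6
        have h7 : S' ≤ ((j - 1 : ℕ) : ℝ) * t r := by
          rw [← hS']; simpa [nsmul_eq_mul] using h6
        rwa [Nat.cast_sub hj, Nat.cast_one] at h7
      have htr : 0 < t r := hpos r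
      have ht0 : 0 < t 0 := hpos 0
      have hn' : (1 : ℝ) ≤ (n : ℝ) := by exact_mod_cast hn
      have hjn' : (j : ℝ) ≤ (n : ℝ) := by exact_mod_cast hjn
      rw [div_le_iff₀ (by positivity : (0 : ℝ) < (n : ℝ))]
      nlinarith [mul_nonneg (by linarith : (0 : ℝ) ≤ (n : ℝ) - 1)
          (by linarith : (0 : ℝ) ≤ t 0 - t r - S'),
        mul_nonneg (by linarith : (0 : ℝ) ≤ (n : ℝ) - (j : ℝ)) htr.le]
    calc Real.exp ((⨆ i, t i) / n) = Real.exp (t 0 / n) := by rw [hsup]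
      _ ≤ Real.exp (t 0 - ∑ i ∈ J.erase r, t i) := Real.exp_le_exp.mpr hkey
      _ = Real.exp (t 0 - ∑ i ∈ J.erase r, t i) * 1 := (mul_one _).symm
      _ ≤ Real.exp (t 0 - ∑ i ∈ J.erase r, t i)
            * |(Matrix.of fun a b => V a (ρ b)).det| := by
          refine mul_le_mul_of_nonneg_left ?_ (Real.exp_pos _).le
          rw [habs]; exact hint
      _ = |(N.updateCol b0 (col r)).det| := by
          rw [hdet, abs_mul, hprod, abs_of_pos (Real.exp_pos _)]
end

section
/- Let ν be a Radon measure on ℝ^d, U ⊂ ℝ^d open, F: U → M_{m,n}(ℝ), and 0 < ε, c < 1. Suppose for every ball B ⊂ U there is s > 0 such that for all t ∈ 𝔞⁺ with ‖t‖ ≥ s, ν({x ∈ B : g_t τ̄(F(x)) ∉ K_ε}) ≤ c·ν(B). Then F_*ν(DI_ε(T)) = 0 for every unbounded T ⊂ 𝔞⁺. -/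
open MeasureTheory

/-- The cone `𝔞⁺`. -/
def aPlus (m n : ℕ) : Set (Fin (m + n) → ℝ) :=
  {t | (∀ i, 0 < t i) ∧
    ∑ i : Fin m, t (Fin.castAdd n i) = ∑ j : Fin n, t (Fin.natAdd m j)}

/-- `g_t τ̄(Y) ∉ K_ε`: the lattice `g_t τ(Y) ℤ^{m+n}` has a nonzero vector of sup-norm
less than `ε`; explicitly, the system `|Yᵢ q − pᵢ| < ε e^{−tᵢ}`, `|qⱼ| < ε e^{t_{m+j}}`
has a nontrivial integer solution. -/
def notInKeps (m n : ℕ) (ε : ℝ) (t : Fin (m + n) → ℝ) (Y : Fin m → Fin n → ℝ) : Prop :=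
  ∃ (q : Fin n → ℤ) (p : Fin m → ℤ), ¬(q = 0 ∧ p = 0) ∧
    (∀ i : Fin m,
      |∑ j : Fin n, Y i j * (q j : ℝ) - (p i : ℝ)| < ε * Real.exp (-(t (Fin.castAdd n i)))) ∧
    (∀ j : Fin n, |(q j : ℝ)| < ε * Real.exp (t (Fin.natAdd m j)))

/-- `DI_ε(T)`. -/
def DIset (m n : ℕ) (ε : ℝ) (T : Set (Fin (m + n) → ℝ)) : Set (Fin m → Fin n → ℝ) :=
  {Y | ∃ t₀ : ℝ, ∀ t ∈ T, t₀ < ‖t‖ →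
    ∃ (q : Fin n → ℤ) (p : Fin m → ℤ), q ≠ 0 ∧
      (∀ i : Fin m,
        |∑ j : Fin n, Y i j * (q j : ℝ) - (p i : ℝ)| < ε * Real.exp (-(t (Fin.castAdd n i)))) ∧
      (∀ j : Fin n, |(q j : ℝ)| < ε * Real.exp (t (Fin.natAdd m j)))}

/-!
Split `DI_ε(T)` according to the threshold `k` beyond which the improvement holds. Around any
point of `U`, once a ball lies in `U`, choosing `t ∈ T` with `‖t‖` large shows that the `k`-th
piece fills at most the proportion `c < 1` of the ball. So no point of the piece is a density
point, and the piece is null by the Lebesgue–Besicovitch density theorem.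
-/

open Metric Filter Set Topology

open scoped ENNReal

theorem Besicovitch.measure_eq_zero_of_frequently_measure_inter_closedBall_le {β : Type*}
    [MetricSpace β] [MeasurableSpace β] [BorelSpace β] [SecondCountableTopology β]
    [HasBesicovitchCovering β] (μ : Measure β) [IsLocallyFiniteMeasure μ] {s : Set β}
    {c : ℝ≥0∞} (hc : c < 1)
    (h : ∀ x ∈ s, ∃ᶠ r in 𝓝[>] 0, μ (s ∩ closedBall x r) ≤ c * μ (closedBall x r)) :
    μ s = 0 := by
  rw [← Measure.restrict_apply_self, measure_eq_zero_iff_ae_notMem]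
  filter_upwards [Besicovitch.ae_tendsto_measure_inter_div μ s] with x hx hxs
  obtain ⟨r, hle, hlt⟩ := ((h x hxs).and_eventually (hx.eventually (lt_mem_nhds hc))).exists
  exact (ENNReal.div_le_of_le_mul hle).not_gt hlt

def notInKepsBeyond (m n : ℕ) (ε : ℝ) (T : Set (Fin (m + n) → ℝ)) (k : ℝ) :
    Set (Fin m → Fin n → ℝ) :=
  {Y | ∀ t ∈ T, k < ‖t‖ → notInKeps m n ε t Y}

theorem DIset_subset_iUnion_notInKepsBeyond (m n : ℕ) (ε : ℝ) (T : Set (Fin (m + n) → ℝ)) :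
    DIset m n ε T ⊆ ⋃ k : ℕ, notInKepsBeyond m n ε T k := by
  rintro Y ⟨t₀, ht₀⟩
  obtain ⟨k, hk⟩ := exists_nat_ge t₀
  refine mem_iUnion.2 ⟨k, fun t ht hkt => ?_⟩
  obtain ⟨q, p, hq, hp, hq'⟩ := ht₀ t ht (hk.trans_lt hkt)
  exact ⟨q, p, fun h => hq h.1, hp, hq'⟩

theorem eventually_measure_preimage_notInKepsBeyond_inter_closedBall_le {d m n : ℕ}
    (ν : Measure (Fin d → ℝ)) {U : Set (Fin d → ℝ)} (hU : IsOpen U)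
    {F : (Fin d → ℝ) → (Fin m → Fin n → ℝ)} {ε c : ℝ}
    (hball : ∀ (x : Fin d → ℝ) (r : ℝ), 0 < r → closedBall x r ⊆ U →
      ∃ s > (0:ℝ), ∀ t ∈ aPlus m n, s ≤ ‖t‖ →
        ν {z ∈ closedBall x r | notInKeps m n ε t (F z)} ≤
          ENNReal.ofReal c * ν (closedBall x r))
    {T : Set (Fin (m + n) → ℝ)} (hT : T ⊆ aPlus m n) (hTunb : ∀ s : ℝ, ∃ t ∈ T, s < ‖t‖)
    (k : ℝ) {x : Fin d → ℝ} (hx : x ∈ U) :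
    ∀ᶠ r in 𝓝[>] 0, ν (F ⁻¹' notInKepsBeyond m n ε T k ∩ closedBall x r) ≤
      ENNReal.ofReal c * ν (closedBall x r) := by
  obtain ⟨δ, hδ, hδU⟩ := Metric.isOpen_iff.1 hU x hx
  filter_upwards [Ioo_mem_nhdsGT hδ] with r ⟨hr, hrδ⟩
  obtain ⟨s, -, hs⟩ := hball x r hr ((closedBall_subset_ball hrδ).trans hδU)
  obtain ⟨t, htT, hst⟩ := hTunb (max s k)
  calc ν (F ⁻¹' notInKepsBeyond m n ε T k ∩ closedBall x r)
      ≤ ν {z ∈ closedBall x r | notInKeps m n ε t (F z)} :=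
        measure_mono fun z ⟨hz, hzB⟩ => ⟨hzB, hz t htT ((le_max_right s k).trans_lt hst)⟩
    _ ≤ ENNReal.ofReal c * ν (closedBall x r) :=
        hs t (hT htT) ((le_max_left s k).trans hst.le)

theorem density_criterion_general (d m n : ℕ)
    (ν : Measure (Fin d → ℝ)) [IsLocallyFiniteMeasure ν]
    (U : Set (Fin d → ℝ)) (hU : IsOpen U)
    (F : (Fin d → ℝ) → (Fin m → Fin n → ℝ))
    (ε c : ℝ) (hc' : c < 1)
    (hball : ∀ (x : Fin d → ℝ) (r : ℝ), 0 < r → Metric.closedBall x r ⊆ U →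
      ∃ s > (0:ℝ), ∀ t ∈ aPlus m n, s ≤ ‖t‖ →
        ν {z ∈ Metric.closedBall x r | notInKeps m n ε t (F z)} ≤
          ENNReal.ofReal c * ν (Metric.closedBall x r)) :
    ∀ T ⊆ aPlus m n, (∀ s : ℝ, ∃ t ∈ T, s < ‖t‖) →
      ν {x ∈ U | F x ∈ DIset m n ε T} = 0 := by
  intro T hT hTunb
  have hcover : {x ∈ U | F x ∈ DIset m n ε T} ⊆
      ⋃ k : ℕ, U ∩ F ⁻¹' notInKepsBeyond m n ε T k := fun x ⟨hxU, hxDI⟩ =>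
    let ⟨k, hk⟩ := mem_iUnion.1 (DIset_subset_iUnion_notInKepsBeyond m n ε T hxDI)
    mem_iUnion.2 ⟨k, hxU, hk⟩
  refine measure_mono_null hcover (measure_iUnion_null fun k => ?_)
  refine Besicovitch.measure_eq_zero_of_frequently_measure_inter_closedBall_le ν
    (ENNReal.ofReal_lt_one.2 hc') fun x hx => Eventually.frequently ?_
  filter_upwards [eventually_measure_preimage_notInKepsBeyond_inter_closedBall_le ν hU hball
    hT hTunb k hx.1] with r hr
  exact (measure_mono (inter_subset_inter_left _ inter_subset_right)).trans hr

/-- **Proposition 3.1 of Kleinbock–Weiss**: let `ν` be a Radon measure on `ℝ^d`, `U`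
open, `F : U → M_{m,n}(ℝ)` and `0 < ε, c < 1`. If for every ball `B ⊆ U` there is
`s > 0` with `ν({x ∈ B : g_t τ̄(F x) ∉ K_ε}) ≤ c ν(B)` for all `t ∈ 𝔞⁺` with
`‖t‖ ≥ s`, then `F_*ν(DI_ε(T)) = 0` for every unbounded `T ⊂ 𝔞⁺`. -/
theorem density_criterion (d m n : ℕ) (hm : 0 < m) (hn : 0 < n)
    (ν : Measure (Fin d → ℝ)) [IsLocallyFiniteMeasure ν] [ν.Regular]
    (U : Set (Fin d → ℝ)) (hU : IsOpen U)
    (F : (Fin d → ℝ) → (Fin m → Fin n → ℝ))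
    (ε c : ℝ) (hε : 0 < ε) (hε' : ε < 1) (hc : 0 < c) (hc' : c < 1)
    (hball : ∀ (x : Fin d → ℝ) (r : ℝ), 0 < r → Metric.closedBall x r ⊆ U →
      ∃ s > (0:ℝ), ∀ t ∈ aPlus m n, s ≤ ‖t‖ →
        ν {z ∈ Metric.closedBall x r | notInKeps m n ε t (F z)} ≤
          ENNReal.ofReal c * ν (Metric.closedBall x r)) :
    ∀ T ⊆ aPlus m n, (∀ s : ℝ, ∃ t ∈ T, s < ‖t‖) →
      ν {x ∈ U | F x ∈ DIset m n ε T} = 0 :=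
  density_criterion_general d m n ν U hU F ε c hc' hball
end

section
/- Any polynomial of degree at most ℓ in one real variable is (C, 1/ℓ)-good on ℝ with respect to Lebesgue measure, for a constant C depending only on ℓ. That is, for any interval B ⊂ ℝ and any ε > 0, λ({x ∈ B : |f(x)| < ε}) ≤ C (ε / sup_{x∈B}|f(x)|)^{1/ℓ} λ(B). -/
/-!
If `|f| < ε` on a set `S` of measure `m` inside an interval of length `2r`, then `S` contains
`ℓ + 1` points that are pairwise `m / (2ℓ + 2)` apart: the balls of that radius around `ℓ`
points have total length less than `m`, so they cannot cover `S`. Lagrange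
interpolation at these nodes bounds `f` on the whole interval by
`(ℓ + 1) ε (4 (ℓ + 1) r / m)^ℓ`; solving for `m` gives the claim.
-/

open MeasureTheory Polynomial
open scoped ENNReal

section Separated

variable {X : Type*} [PseudoMetricSpace X] [MeasurableSpace X] {μ : Measure X} {E : Set X}
  {δ : ℝ} {c : ℝ≥0∞}

lemma exists_mem_forall_le_dist (hball : ∀ x, μ (Metric.ball x δ) ≤ c) (F : Finset X)
    (hF : F.card * c < μ E) : ∃ p ∈ E, ∀ q ∈ F, δ ≤ dist p q := by
  by_contra! h
  have hcover : E ⊆ ⋃ q ∈ F, Metric.ball q δ := fun p hp ↦ by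
    obtain ⟨q, hq, hpq⟩ := h p hp
    exact Set.mem_biUnion hq hpq
  have : μ E ≤ F.card * c := calc
    μ E ≤ ∑ q ∈ F, μ (Metric.ball q δ) :=
      (measure_mono hcover).trans (measure_biUnion_finset_le F _)
    _ ≤ ∑ _q ∈ F, c := Finset.sum_le_sum fun q _ ↦ hball q
    _ = F.card * c := by rw [Finset.sum_const, nsmul_eq_mul]
  exact (this.trans_lt hF).false

lemma exists_finset_pairwise_le_dist (hδ : 0 < δ) (hball : ∀ x, μ (Metric.ball x δ) ≤ c)
    (n : ℕ) (hn : n * c < μ E) :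
    ∃ F : Finset X, F.card = n + 1 ∧ ↑F ⊆ E ∧ (F : Set X).Pairwise fun p q ↦ δ ≤ dist p q := by
  classical
  induction n with
  | zero =>
    obtain ⟨p, hp, -⟩ := exists_mem_forall_le_dist hball ∅ (by simpa using hn)
    exact ⟨{p}, rfl, by simpa using hp, by simp⟩
  | succ n ih =>
    obtain ⟨F, hcard, hFE, hFsep⟩ :=
      ih ((mul_le_mul_left (by simp) c).trans_lt hn)
    obtain ⟨p, hpE, hpF⟩ := exists_mem_forall_le_dist hball F (by rwa [hcard])
    have hp : p ∉ F := fun h ↦ (hpF p h).not_gt (by simpa using hδ)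
    refine ⟨insert p F, by rw [Finset.card_insert_of_notMem hp, hcard], ?_, ?_⟩
    · rw [Finset.coe_insert]
      exact Set.insert_subset hpE hFE
    · rw [Finset.coe_insert]
      exact hFsep.insert fun q hq _ ↦ ⟨hpF q hq, dist_comm p q ▸ hpF q hq⟩

end Separated

namespace Polynomial

lemma abs_eval_le_sum_lagrange (f : ℝ[X]) {s : Finset ℝ} (hdeg : f.degree < s.card) (x : ℝ) :
    |f.eval x| ≤ ∑ i ∈ s, |f.eval i| * ∏ j ∈ s.erase i, |x - j| / |i - j| := by
  have hf := Lagrange.eq_interpolate (v := id) (Set.injOn_id _) hdeg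
  calc |f.eval x|
      = |∑ i ∈ s, f.eval i * (Lagrange.basis s id i).eval x| := by
        rw [congrArg (eval x) hf, Lagrange.interpolate_apply, eval_finsetSum]
        simp only [eval_mul, eval_C, id]
    _ ≤ ∑ i ∈ s, |f.eval i * (Lagrange.basis s id i).eval x| := Finset.abs_sum_le_sum_abs _ _
    _ = ∑ i ∈ s, |f.eval i| * ∏ j ∈ s.erase i, |x - j| / |i - j| := by
        refine Finset.sum_congr rfl fun i _ ↦ ?_
        rw [abs_mul, Lagrange.basis, eval_prod, Finset.abs_prod]
        congr 1
        refine Finset.prod_congr rfl fun j _ ↦ ?_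
        simp only [Lagrange.basisDivisor, id, eval_mul, eval_C, eval_sub, eval_X, abs_mul,
          abs_inv, div_eq_inv_mul]

lemma abs_eval_le_of_pairwise_le_abs_sub (f : ℝ[X]) {s : Finset ℝ} (hdeg : f.degree < s.card)
    {ε δ D x : ℝ} (hδ : 0 < δ) (hfs : ∀ i ∈ s, |f.eval i| ≤ ε)
    (hsep : (s : Set ℝ).Pairwise fun i j ↦ δ ≤ |i - j|) (hx : ∀ j ∈ s, |x - j| ≤ D) :
    |f.eval x| ≤ s.card * (ε * (D / δ) ^ (s.card - 1)) := by
  have hterm : ∀ i ∈ s, |f.eval i| * ∏ j ∈ s.erase i, |x - j| / |i - j| ≤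
      ε * (D / δ) ^ (s.card - 1) := by
    intro i hi
    have hprod : ∏ j ∈ s.erase i, |x - j| / |i - j| ≤ (D / δ) ^ (s.card - 1) := by
      rw [← Finset.card_erase_of_mem hi, ← Finset.prod_const]
      refine Finset.prod_le_prod (fun j _ ↦ by positivity) fun j hj ↦ ?_
      obtain ⟨hji, hj⟩ := Finset.mem_erase.1 hj
      exact div_le_div₀ ((abs_nonneg _).trans (hx j hj)) (hx j hj) hδ (hsep hi hj hji.symm)
    exact mul_le_mul (hfs i hi) hprod (by positivity) ((abs_nonneg _).trans (hfs i hi))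
  calc |f.eval x| ≤ ∑ i ∈ s, |f.eval i| * ∏ j ∈ s.erase i, |x - j| / |i - j| :=
        abs_eval_le_sum_lagrange f hdeg x
    _ ≤ ∑ _i ∈ s, ε * (D / δ) ^ (s.card - 1) := Finset.sum_le_sum hterm
    _ = s.card * (ε * (D / δ) ^ (s.card - 1)) := by rw [Finset.sum_const, nsmul_eq_mul]

/-- A Remez-type inequality. -/
lemma abs_eval_mul_pow_le_of_le_volume {f : ℝ[X]} {ℓ : ℕ} (hf : f.natDegree ≤ ℓ) {E : Set ℝ}
    {ε D m : ℝ} (hm : 0 < m) (hmE : ENNReal.ofReal m ≤ volume E)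
    (hfE : ∀ z ∈ E, |f.eval z| ≤ ε) {x : ℝ} (hx : ∀ z ∈ E, |x - z| ≤ D) :
    |f.eval x| * m ^ ℓ ≤ (ℓ + 1) * (ε * (2 * (ℓ + 1) * D) ^ ℓ) := by
  set δ := m / (2 * (ℓ + 1))
  have hδ : 0 < δ := by positivity
  have hδm : 2 * (ℓ + 1) * δ = m := by
    simp only [δ]
    field_simp
  have hcover : (ℓ : ℝ≥0∞) * ENNReal.ofReal (2 * δ) < volume E := by
    refine lt_of_lt_of_le ?_ hmE
    rw [← ENNReal.ofReal_natCast, ← ENNReal.ofReal_mul (by positivity),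
      ENNReal.ofReal_lt_ofReal_iff hm]
    linarith
  obtain ⟨s, hcard, hsE, hsep⟩ :=
    exists_finset_pairwise_le_dist hδ (fun y ↦ (Real.volume_ball y δ).le) ℓ hcover
  have hdeg : f.degree < s.card := by
    rw [hcard]
    exact (degree_le_natDegree).trans_lt (by exact_mod_cast Nat.lt_succ_of_le hf)
  have hbound := abs_eval_le_of_pairwise_le_abs_sub f hdeg hδ (fun i hi ↦ hfE i (hsE hi))
    (fun i hi j hj hij ↦ by simpa only [Real.dist_eq] using hsep hi hj hij)
    (fun j hj ↦ hx j (hsE hj))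
  rw [hcard, Nat.add_sub_cancel] at hbound
  push_cast at hbound
  calc |f.eval x| * m ^ ℓ ≤ (ℓ + 1) * (ε * (D / δ) ^ ℓ) * m ^ ℓ := by gcongr
    _ = (ℓ + 1) * (ε * (2 * (ℓ + 1) * D) ^ ℓ) := by
      rw [mul_assoc, mul_assoc, ← mul_pow]
      congr 3
      rw [← hδm]
      field_simp

lemma sSup_abs_eval_pos {f : ℝ[X]} (hf : f ≠ 0) {K : Set ℝ} (hK : IsCompact K)
    (hKinf : K.Infinite) : 0 < sSup ((fun y ↦ |f.eval y|) '' K) := by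
  obtain ⟨y, hyK, hy⟩ : ∃ y ∈ K, f.eval y ≠ 0 := by
    by_contra! h
    exact hf (f.eq_zero_of_infinite_isRoot (hKinf.mono h))
  have hbdd := (hK.image (continuous_abs.comp f.continuous)).bddAbove
  exact (abs_pos.2 hy).trans_le (le_csSup hbdd ⟨y, hyK, rfl⟩)

end Polynomial

lemma le_rpow_one_div_mul_of_pow_le {m a b : ℝ} {ℓ : ℕ} (hℓ : ℓ ≠ 0) (hm : 0 ≤ m) (ha : 0 ≤ a)
    (hb : 0 ≤ b) (h : m ^ ℓ ≤ a * b ^ ℓ) : m ≤ a ^ ((1 : ℝ) / ℓ) * b := by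
  rw [one_div, ← Real.pow_rpow_inv_natCast hb hℓ, ← Real.mul_rpow ha (by positivity),
    Real.le_rpow_inv_iff_of_pos hm (by positivity) (by positivity), Real.rpow_natCast]
  exact h

/-- **Polynomials are `(C, 1/ℓ)`-good** (Kleinbock–Margulis, Lemma 3.2): for each
`ℓ ≥ 1` there is `C > 0` depending only on `ℓ` such that for every nonzero real
polynomial `f` of degree at most `ℓ`, every interval `B` and every `ε > 0`,
`λ({x ∈ B : |f(x)| < ε}) ≤ C (ε / sup_B |f|)^{1/ℓ} λ(B)`. -/
theorem polynomial_good (ℓ : ℕ) (hℓ : 1 ≤ ℓ) :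
    ∃ C > (0:ℝ), ∀ f : Polynomial ℝ, f ≠ 0 → f.natDegree ≤ ℓ →
      ∀ (x r : ℝ), 0 < r → ∀ ε > (0:ℝ),
        volume {y ∈ Metric.closedBall x r | |f.eval y| < ε} ≤
          ENNReal.ofReal
            (C * (ε / sSup ((fun y => |f.eval y|) '' Metric.closedBall x r)) ^ ((1:ℝ)/ℓ)) *
          volume (Metric.closedBall x r) := by
  refine ⟨((ℓ : ℝ) + 1) ^ ((1 : ℝ) / ℓ) * (2 * (ℓ + 1)), by positivity, ?_⟩
  intro f hf hdeg x r hr ε hε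
  set B := Metric.closedBall x r
  set M := sSup ((fun y ↦ |f.eval y|) '' B)
  set S := {y ∈ B | |f.eval y| < ε}
  have hBvol : volume B = ENNReal.ofReal (2 * r) := Real.volume_closedBall x r
  have hM : 0 < M := sSup_abs_eval_pos hf (isCompact_closedBall x r)
    (by simp only [B, Real.closedBall_eq_Icc]; exact Set.Icc_infinite (by linarith))
  set m := (volume S).toReal
  have hSm : volume S = ENNReal.ofReal m := (ENNReal.ofReal_toReal
    (ne_top_of_le_ne_top (hBvol ▸ ENNReal.ofReal_ne_top) (measure_mono fun y hy ↦ hy.1))).symm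
  obtain hm | hm := (show 0 ≤ m from ENNReal.toReal_nonneg).eq_or_lt
  · rw [hSm, ← hm, ENNReal.ofReal_zero]
    exact zero_le
  have hbound : ∀ y ∈ B, |f.eval y| ≤ (ℓ + 1) * (ε * (2 * (ℓ + 1) * (2 * r)) ^ ℓ) / m ^ ℓ :=
    fun y hy ↦ (le_div_iff₀ (by positivity)).2 <| abs_eval_mul_pow_le_of_le_volume hdeg hm hSm.ge
      (fun z hz ↦ hz.2.le) fun z hz ↦ by
        rw [← Real.dist_eq]
        linarith [dist_triangle_right y z x, Metric.mem_closedBall.1 hy,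
          Metric.mem_closedBall.1 hz.1]
  have hMm : m ^ ℓ ≤ (ℓ + 1) * (ε / M) * (2 * (ℓ + 1) * (2 * r)) ^ ℓ := by
    have hMle := csSup_le ((Metric.nonempty_closedBall.2 hr.le).image _)
      (Set.forall_mem_image.2 hbound)
    rw [le_div_iff₀ (by positivity)] at hMle
    rw [mul_div_assoc', div_mul_eq_mul_div, le_div_iff₀ hM]
    linarith
  have hmr := le_rpow_one_div_mul_of_pow_le (by omega) hm.le (by positivity) (by positivity) hMm
  rw [hSm, hBvol, ← ENNReal.ofReal_mul (by positivity)]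
  refine ENNReal.ofReal_le_ofReal (hmr.trans_eq ?_)
  rw [Real.mul_rpow (by positivity) (by positivity)]
  ring
end

section
/- Let B be an interval in ℝ and f ∈ C^ℓ(B) with a ≤ |f^{(ℓ)}(x)| ≤ A for all x ∈ B, where 0 < a ≤ A. Then there is a constant C₁ (absolute) such that for all ε > 0, λ({x ∈ B : |f(x)| < ε}) ≤ ℓ C₁ (A/a)^{1/ℓ} (ε / ‖f‖_{λ,B})^{1/ℓ} λ(B). -/
/-!
Let `E = {x ∈ B : |f x| < ε}` have measure `m` and put `d = m / (2ℓ + 2)`. Since `ℓ` balls of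
radius `d` cannot cover `E`, it contains `ℓ + 1` points that are pairwise `d` apart.
Applying Rolle's theorem `ℓ` times to `f` minus a polynomial interpolating it at `ℓ + 1` points
gives
* the divided-difference formula `f^(ℓ)(ξ) = ℓ! ∑ᵢ f(xᵢ) / ∏_{j ≠ i} (xᵢ - xⱼ)` at the selected
  points, hence `a d^ℓ ≤ ℓ! (ℓ + 1) ε`;
* the interpolation error formula at a maximum point `y` of `|f|`, with `ℓ` of the selected points
  as nodes, hence `‖f‖ ≤ A |B|^ℓ / ℓ! + ℓ ε (|B| / d)^(ℓ - 1)`.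
Together these give `d^ℓ ≤ (2ℓ + 1) (A / a) (ε / ‖f‖) |B|^ℓ`, and taking `ℓ`-th roots yields the
claim with `C₁ = 12`.
-/

open Set MeasureTheory Polynomial
open scoped ENNReal

theorem exists_iteratedDerivWithin_eq_zero_of_strictMono {s : Set ℝ} (hs : UniqueDiffOn ℝ s)
    (hs' : s.OrdConnected) :
    ∀ {n : ℕ} {g : ℝ → ℝ}, ContDiffOn ℝ n g s → ∀ x : Fin (n + 1) → ℝ, StrictMono x →
      (∀ i, x i ∈ s) → (∀ i, g (x i) = 0) → ∃ ξ ∈ s, iteratedDerivWithin n g s ξ = 0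
  | 0, g, _, x, _, hxs, hgx => ⟨x 0, hxs 0, by simpa using hgx 0⟩
  | n + 1, g, hg, x, hx, hxs, hgx => by
    have hrolle (i : Fin (n + 1)) :
        ∃ c ∈ Ioo (x i.castSucc) (x i.succ), derivWithin g s c = 0 := by
      have hsub := hs'.out (hxs i.castSucc) (hxs i.succ)
      obtain ⟨c, hc, hc0⟩ := exists_deriv_eq_zero (hx Fin.castSucc_lt_succ)
        (hg.continuousOn.mono hsub) (by rw [hgx, hgx])
      refine ⟨c, hc, ?_⟩
      rwa [derivWithin_of_mem_nhds (Filter.mem_of_superset (isOpen_Ioo.mem_nhds hc)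
        (Ioo_subset_Icc_self.trans hsub))]
    choose c hc hc0 using hrolle
    have hcs (i : Fin (n + 1)) : c i ∈ s :=
      hs'.out (hxs i.castSucc) (hxs i.succ) (Ioo_subset_Icc_self (hc i))
    have hcmono : StrictMono c := Fin.strictMono_iff_lt_succ.2 fun i =>
      calc c i.castSucc < x i.castSucc.succ := (hc _).2
        _ = x i.succ.castSucc := by rw [Fin.succ_castSucc]
        _ < c i.succ := (hc _).1
    obtain ⟨ξ, hξs, hξ⟩ := exists_iteratedDerivWithin_eq_zero_of_strictMono hs hs'
      (hg.derivWithin hs (by norm_cast)) c hcmono hcs hc0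
    exact ⟨ξ, hξs, by rwa [iteratedDerivWithin_succ']⟩

theorem exists_iteratedDerivWithin_eq_zero {s : Set ℝ} (hs : UniqueDiffOn ℝ s)
    (hs' : s.OrdConnected) {n : ℕ} {g : ℝ → ℝ} (hg : ContDiffOn ℝ n g s) {Z : Finset ℝ}
    (hZ : Z.card = n + 1) (hZs : ↑Z ⊆ s) (hgZ : ∀ z ∈ Z, g z = 0) :
    ∃ ξ ∈ s, iteratedDerivWithin n g s ξ = 0 :=
  exists_iteratedDerivWithin_eq_zero_of_strictMono hs hs' hg (Z.orderEmbOfFin hZ)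
    (Z.orderEmbOfFin hZ).strictMono (fun i => hZs (Z.orderEmbOfFin_mem hZ i))
    (fun i => hgZ _ (Z.orderEmbOfFin_mem hZ i))

theorem Polynomial.iteratedDeriv_eval {𝕜 : Type*} [NontriviallyNormedField 𝕜] (p : 𝕜[X])
    (n : ℕ) :
    iteratedDeriv n (fun x => p.eval x) = fun x => (derivative^[n] p).eval x := by
  induction n with
  | zero => rfl
  | succ n ih =>
    ext x
    rw [iteratedDeriv_succ, ih, Polynomial.deriv, Function.iterate_succ_apply']

theorem Polynomial.iteratedDerivWithin_eval_of_natDegree_le {𝕜 : Type*}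
    [NontriviallyNormedField 𝕜] {s : Set 𝕜} (hs : UniqueDiffOn 𝕜 s) {p : 𝕜[X]} {n : ℕ}
    (hp : p.natDegree ≤ n) {x : 𝕜} (hx : x ∈ s) :
    iteratedDerivWithin n (fun t => p.eval t) s x = n.factorial * p.coeff n := by
  have hcd : ContDiff 𝕜 n fun t => p.eval t := p.contDiff_aeval n
  rw [iteratedDerivWithin_eq_iteratedDeriv hs hcd.contDiffAt hx, p.iteratedDeriv_eval,
    eq_C_of_natDegree_le_zero ((natDegree_iterate_derivative p n).trans (by omega)),
    coeff_iterate_derivative]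
  simp [Nat.descFactorial_self, nsmul_eq_mul]

theorem pow_le_of_mul_pow_le_of_le_add {ℓ : ℕ} (hℓ : ℓ ≠ 0) {a A d L ε M : ℝ} (ha : 0 < a)
    (haA : a ≤ A) (hd : 0 < d) (hdL : d ≤ L) (hε : 0 ≤ ε) (hM : 0 < M)
    (hlow : a * d ^ ℓ ≤ ℓ.factorial * (ℓ + 1) * ε)
    (hup : M ≤ A * L ^ ℓ / ℓ.factorial + ℓ * ε * (L / d) ^ (ℓ - 1)) :
    d ^ ℓ ≤ (2 * ℓ + 1) * (A / a * (ε / M)) * L ^ ℓ := by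
  have hL : 0 < L := hd.trans_le hdL
  have hA : 0 ≤ A * L ^ ℓ / ℓ.factorial := by have := ha.trans_le haA; positivity
  have hlow' : d ^ ℓ ≤ ℓ.factorial * (ℓ + 1) * ε / a := by rw [le_div_iff₀ ha, mul_comm]; exact hlow
  have hAa : 1 ≤ A / a := (one_le_div ha).2 haA
  have hpow : (L / d) ^ (ℓ - 1) * d ^ ℓ ≤ L ^ ℓ :=
    calc _ = L ^ (ℓ - 1) * d := by
          rw [← pow_sub_one_mul hℓ d, ← mul_assoc, ← mul_pow, div_mul_cancel₀ _ hd.ne']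
      _ ≤ L ^ (ℓ - 1) * L := by gcongr
      _ = L ^ ℓ := pow_sub_one_mul hℓ L
  rw [← mul_le_mul_iff_of_pos_left hM]
  calc M * d ^ ℓ ≤ (A * L ^ ℓ / ℓ.factorial + ℓ * ε * (L / d) ^ (ℓ - 1)) * d ^ ℓ := by gcongr
    _ = A * L ^ ℓ / ℓ.factorial * d ^ ℓ + ℓ * ε * ((L / d) ^ (ℓ - 1) * d ^ ℓ) := by ring
    _ ≤ A * L ^ ℓ / ℓ.factorial * (ℓ.factorial * (ℓ + 1) * ε / a) + ℓ * 1 * ε * L ^ ℓ := by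
        rw [mul_one]; gcongr
    _ ≤ A * L ^ ℓ / ℓ.factorial * (ℓ.factorial * (ℓ + 1) * ε / a) + ℓ * (A / a) * ε * L ^ ℓ := by
        gcongr
    _ = M * ((2 * ℓ + 1) * (A / a * (ε / M)) * L ^ ℓ) := by field_simp; ring

theorem le_three_mul_rpow_mul_of_pow_le {ℓ : ℕ} (hℓ : ℓ ≠ 0) {x c L : ℝ} (hc : 0 ≤ c)
    (hL : 0 ≤ L) (h : x ^ ℓ ≤ (2 * ℓ + 1) * c * L ^ ℓ) : x ≤ 3 * c ^ ((1 : ℝ) / ℓ) * L := by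
  refine le_of_pow_le_pow_left₀ hℓ (by positivity) (h.trans ?_)
  have h3 : (2 * ℓ + 1 : ℝ) ≤ 3 ^ ℓ := by
    have := one_add_mul_le_pow (by norm_num : (-2 : ℝ) ≤ 2) ℓ
    norm_num at this; linarith
  rw [mul_pow, mul_pow, one_div, Real.rpow_inv_natCast_pow hc hℓ]
  gcongr

theorem Lagrange.abs_eval_interpolate_le {G : Finset ℝ} {f : ℝ → ℝ} {d ε L y : ℝ} (hd : 0 < d)
    (hsep : (G : Set ℝ).Pairwise fun x y => d ≤ dist x y) (hfG : ∀ x ∈ G, |f x| ≤ ε)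
    (hL : ∀ z ∈ G, |y - z| ≤ L) :
    |(Lagrange.interpolate G id f).eval y| ≤ G.card * ε * (L / d) ^ (G.card - 1) := by
  have hterm (z : ℝ) (hz : z ∈ G) :
      |f z| / (∏ w ∈ G.erase z, |z - w|) * ∏ w ∈ G.erase z, |y - w| ≤
        ε * (L / d) ^ (G.card - 1) := by
    have hcard : (G.erase z).card = G.card - 1 := Finset.card_erase_of_mem hz
    have hε : 0 ≤ ε := (abs_nonneg _).trans (hfG z hz)
    have hL0 : 0 ≤ L := (abs_nonneg _).trans (hL z hz)
    have hden : d ^ (G.card - 1) ≤ ∏ w ∈ G.erase z, |z - w| :=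
      calc d ^ (G.card - 1) = ∏ _w ∈ G.erase z, d := by simp [hcard]
        _ ≤ _ := Finset.prod_le_prod (fun _ _ => hd.le) fun w hw =>
          hsep hz (Finset.mem_of_mem_erase hw) (Finset.ne_of_mem_erase hw).symm
    have hnum : ∏ w ∈ G.erase z, |y - w| ≤ L ^ (G.card - 1) :=
      calc _ ≤ ∏ _w ∈ G.erase z, L := Finset.prod_le_prod (fun _ _ => abs_nonneg _)
            fun w hw => hL w (Finset.mem_of_mem_erase hw)
        _ = L ^ (G.card - 1) := by simp [hcard]
    rw [div_pow, div_mul_eq_mul_div, mul_div_assoc]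
    gcongr
    exact hfG z hz
  rw [Lagrange.interpolate_eq_sum, eval_finsetSum]
  calc _ ≤ ∑ z ∈ G, |(C (f z / ∏ w ∈ G.erase z, (z - w)) *
          ∏ w ∈ G.erase z, (X - C w)).eval y| := Finset.abs_sum_le_sum_abs _ _
    _ ≤ G.card • (ε * (L / d) ^ (G.card - 1)) := Finset.sum_le_card_nsmul _ _ _ fun z hz => by
        simpa [eval_prod, abs_div, Finset.abs_prod] using hterm z hz
    _ = _ := by rw [nsmul_eq_mul]; ring

section Interpolation

variable {s : Set ℝ} (hs : UniqueDiffOn ℝ s) (hs' : s.OrdConnected) {n : ℕ} {f : ℝ → ℝ}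
  (hf : ContDiffOn ℝ n f s)
include hs hs' hf

theorem exists_iteratedDerivWithin_eq_factorial_mul_coeff {p : ℝ[X]} (hp : p.natDegree ≤ n)
    {Z : Finset ℝ} (hZ : Z.card = n + 1) (hZs : ↑Z ⊆ s) (hfZ : ∀ z ∈ Z, f z = p.eval z) :
    ∃ ξ ∈ s, iteratedDerivWithin n f s ξ = n.factorial * p.coeff n := by
  have hp' : ContDiffOn ℝ n (fun t => p.eval t) s := (p.contDiff_aeval n).contDiffOn
  obtain ⟨ξ, hξs, hξ⟩ := exists_iteratedDerivWithin_eq_zero hs hs' (hf.sub hp') hZ hZs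
    fun z hz => sub_eq_zero.2 (hfZ z hz)
  change iteratedDerivWithin n (f - fun t => p.eval t) s ξ = 0 at hξ
  refine ⟨ξ, hξs, ?_⟩
  rwa [iteratedDerivWithin_sub hξs hs (hf.contDiffWithinAt hξs) (hp'.contDiffWithinAt hξs),
    iteratedDerivWithin_eval_of_natDegree_le hs hp hξs, sub_eq_zero] at hξ

theorem exists_iteratedDerivWithin_eq_factorial_mul_sum {Z : Finset ℝ} (hZ : Z.card = n + 1)
    (hZs : ↑Z ⊆ s) :
    ∃ ξ ∈ s, iteratedDerivWithin n f s ξ =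
      n.factorial * ∑ z ∈ Z, f z / ∏ w ∈ Z.erase z, (z - w) := by
  have hinj : InjOn id (Z : Set ℝ) := injOn_id _
  have heval (z : ℝ) (hz : z ∈ Z) : (Lagrange.interpolate Z id f).eval z = f z :=
    Lagrange.eval_interpolate_at_node f hinj hz
  have hdeg : (Lagrange.interpolate Z id f).natDegree ≤ n :=
    natDegree_le_of_degree_le ((Lagrange.degree_interpolate_le f hinj).trans (by simp [hZ]))
  obtain ⟨ξ, hξs, hξ⟩ := exists_iteratedDerivWithin_eq_factorial_mul_coeff hs hs' hf hdeg hZ hZs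
    fun z hz => (heval z hz).symm
  have hcoeff := Lagrange.coeff_eq_sum hinj (Lagrange.degree_interpolate_lt f hinj)
  rw [hZ, add_tsub_cancel_right] at hcoeff
  refine ⟨ξ, hξs, ?_⟩
  rw [hξ, hcoeff]
  congr 1
  exact Finset.sum_congr rfl fun z hz => by simp only [id, heval z hz]

theorem exists_eq_eval_interpolate_add {G : Finset ℝ} (hG : G.card = n) (hGs : ↑G ⊆ s) {y : ℝ}
    (hy : y ∈ s) :
    ∃ ξ ∈ s, f y = (Lagrange.interpolate G id f).eval y +
      iteratedDerivWithin n f s ξ / n.factorial * (Lagrange.nodal G id).eval y := by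
  have hinj : InjOn id (G : Set ℝ) := injOn_id _
  set P := Lagrange.interpolate G id f
  set ω := Lagrange.nodal G id
  by_cases hyG : y ∈ G
  · refine ⟨y, hy, ?_⟩
    rw [show ω.eval y = 0 from Lagrange.eval_nodal_at_node (v := id) hyG,
      show P.eval y = f y from Lagrange.eval_interpolate_at_node f hinj hyG, mul_zero, add_zero]
  have hωy : ω.eval y ≠ 0 :=
    Lagrange.eval_nodal_not_at_node fun z hz h => hyG (h ▸ hz)
  set K := (f y - P.eval y) / ω.eval y
  have hK : K * ω.eval y = f y - P.eval y := div_mul_cancel₀ _ hωy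
  have hPdeg : P.degree < n := hG ▸ Lagrange.degree_interpolate_lt f hinj
  have hωdeg : ω.natDegree = n := by rw [Lagrange.natDegree_nodal, hG]
  have hdeg : (P + C K * ω).natDegree ≤ n :=
    natDegree_add_le_of_degree_le (natDegree_le_of_degree_le (hPdeg.le.trans (by simp)))
      (natDegree_C_mul_le _ _ |>.trans hωdeg.le)
  have hcoeff : (P + C K * ω).coeff n = K := by
    rw [coeff_add, coeff_eq_zero_of_degree_lt hPdeg, coeff_C_mul, ← hωdeg,
      Lagrange.nodal_monic.coeff_natDegree]
    ring
  have hZ : (insert y G).card = n + 1 := by rw [Finset.card_insert_of_notMem hyG, hG]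
  obtain ⟨ξ, hξs, hξ⟩ := exists_iteratedDerivWithin_eq_factorial_mul_coeff hs hs' hf hdeg hZ
    (by simpa [insert_subset_iff] using ⟨hy, hGs⟩) (by
      simp only [Finset.mem_insert, forall_eq_or_imp, eval_add, eval_C, eval_mul]
      refine ⟨by linarith, fun z hz => ?_⟩
      rw [show P.eval z = f z from Lagrange.eval_interpolate_at_node f hinj hz,
        show ω.eval z = 0 from Lagrange.eval_nodal_at_node (v := id) hz]
      ring)
  refine ⟨ξ, hξs, ?_⟩
  rw [hξ, hcoeff, mul_div_cancel_left₀ _ (by positivity)]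
  linarith

theorem mul_pow_le_of_pairwise_le_dist {F : Finset ℝ} (hF : F.card = n + 1) (hFs : ↑F ⊆ s)
    {a d ε : ℝ} (hd : 0 < d) (hsep : (F : Set ℝ).Pairwise fun x y => d ≤ dist x y)
    (hfF : ∀ x ∈ F, |f x| ≤ ε) (ha : ∀ x ∈ s, a ≤ |iteratedDerivWithin n f s x|) :
    a * d ^ n ≤ n.factorial * (n + 1) * ε := by
  obtain ⟨ξ, hξs, hξ⟩ := exists_iteratedDerivWithin_eq_factorial_mul_sum hs hs' hf hF hFs
  have hε : 0 ≤ ε := by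
    obtain ⟨x, hx⟩ := Finset.card_pos.1 (by rw [hF]; omega)
    exact (abs_nonneg _).trans (hfF x hx)
  have hterm (z : ℝ) (hz : z ∈ F) : |f z / ∏ w ∈ F.erase z, (z - w)| ≤ ε / d ^ n := by
    have hprod : d ^ n ≤ ∏ w ∈ F.erase z, |z - w| :=
      calc d ^ n = ∏ _w ∈ F.erase z, d := by simp [Finset.card_erase_of_mem hz, hF]
        _ ≤ _ := Finset.prod_le_prod (fun _ _ => hd.le) fun w hw =>
          hsep hz (Finset.mem_of_mem_erase hw) (Finset.ne_of_mem_erase hw).symm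
    rw [abs_div, Finset.abs_prod]
    exact div_le_div₀ hε (hfF z hz) (by positivity) hprod
  have hsum : |∑ z ∈ F, f z / ∏ w ∈ F.erase z, (z - w)| ≤ (n + 1) * (ε / d ^ n) := by
    calc _ ≤ ∑ z ∈ F, |f z / ∏ w ∈ F.erase z, (z - w)| := Finset.abs_sum_le_sum_abs _ _
      _ ≤ F.card • (ε / d ^ n) := Finset.sum_le_card_nsmul _ _ _ hterm
      _ = (n + 1) * (ε / d ^ n) := by rw [nsmul_eq_mul, hF]; push_cast; ring
  rw [← le_div_iff₀ (by positivity)]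
  calc a ≤ |iteratedDerivWithin n f s ξ| := ha ξ hξs
    _ = n.factorial * |∑ z ∈ F, f z / ∏ w ∈ F.erase z, (z - w)| := by
      rw [hξ, abs_mul, Nat.abs_cast]
    _ ≤ n.factorial * ((n + 1) * (ε / d ^ n)) := by gcongr
    _ = _ := by ring

theorem abs_le_of_pairwise_le_dist {G : Finset ℝ} (hG : G.card = n) (hGs : ↑G ⊆ s)
    {A d ε L : ℝ} (hd : 0 < d) (hsep : (G : Set ℝ).Pairwise fun x y => d ≤ dist x y)
    (hfG : ∀ x ∈ G, |f x| ≤ ε) (hA : ∀ x ∈ s, |iteratedDerivWithin n f s x| ≤ A)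
    (hL : ∀ x ∈ s, ∀ y ∈ s, |x - y| ≤ L) {y : ℝ} (hy : y ∈ s) :
    |f y| ≤ A * L ^ n / n.factorial + n * ε * (L / d) ^ (n - 1) := by
  obtain ⟨ξ, hξs, hξ⟩ := exists_eq_eval_interpolate_add hs hs' hf hG hGs hy
  have hnodal : |(Lagrange.nodal G id).eval y| ≤ L ^ n := by
    rw [Lagrange.eval_nodal, Finset.abs_prod]
    calc _ ≤ ∏ _z ∈ G, L :=
          Finset.prod_le_prod (fun _ _ => abs_nonneg _) fun z hz => hL y hy z (hGs hz)
      _ = L ^ n := by simp [hG]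
  have hinterp := Lagrange.abs_eval_interpolate_le hd hsep hfG fun z hz => hL y hy z (hGs hz)
  rw [hG] at hinterp
  have hA0 : 0 ≤ A := (abs_nonneg _).trans (hA y hy)
  rw [hξ]
  calc _ ≤ |(Lagrange.interpolate G id f).eval y| +
        |iteratedDerivWithin n f s ξ / n.factorial * (Lagrange.nodal G id).eval y| :=
        abs_add_le _ _
    _ = |(Lagrange.interpolate G id f).eval y| +
        |iteratedDerivWithin n f s ξ| / n.factorial * |(Lagrange.nodal G id).eval y| := by
        rw [abs_mul, abs_div, Nat.abs_cast]
    _ ≤ n * ε * (L / d) ^ (n - 1) + A / n.factorial * L ^ n := by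
        gcongr
        exact hA ξ hξs
    _ = _ := by ring

theorem pow_le_of_pairwise_le_dist (hn : n ≠ 0) {F : Finset ℝ} (hF : F.card = n + 1)
    (hFs : ↑F ⊆ s) {a A d ε L : ℝ} (ha : 0 < a) (haA : a ≤ A) (hd : 0 < d)
    (hsep : (F : Set ℝ).Pairwise fun x y => d ≤ dist x y) (hfF : ∀ x ∈ F, |f x| ≤ ε)
    (hder : ∀ x ∈ s, a ≤ |iteratedDerivWithin n f s x| ∧ |iteratedDerivWithin n f s x| ≤ A)
    (hL : ∀ x ∈ s, ∀ y ∈ s, |x - y| ≤ L) {y : ℝ} (hy : y ∈ s)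
    (hymax : ∀ x ∈ s, |f x| ≤ |f y|) :
    d ^ n ≤ (2 * n + 1) * (A / a * (ε / |f y|)) * L ^ n := by
  obtain ⟨x₀, hx₀, x₁, hx₁, hx₀₁⟩ := Finset.one_lt_card.1 (by omega : 1 < F.card)
  have hdL : d ≤ L := (hsep hx₀ hx₁ hx₀₁).trans ((Real.dist_eq _ _).trans_le
    (hL _ (hFs hx₀) _ (hFs hx₁)))
  have hlow := mul_pow_le_of_pairwise_le_dist hs hs' hf hF hFs hd hsep hfF
    fun x hx => (hder x hx).1
  have hpos : 0 < |f y| := by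
    have := mul_pow_le_of_pairwise_le_dist hs hs' hf hF hFs hd hsep
      (fun x hx => hymax x (hFs hx)) fun x hx => (hder x hx).1
    exact pos_of_mul_pos_right ((by positivity : 0 < a * d ^ n).trans_le this) (by positivity)
  have hG : ↑(F.erase x₀) ⊆ (F : Set ℝ) := Finset.coe_subset.2 (F.erase_subset x₀)
  have hup := abs_le_of_pairwise_le_dist hs hs' hf
    (by rw [Finset.card_erase_of_mem hx₀, hF, Nat.add_sub_cancel]) (hG.trans hFs) hd
    (hsep.mono hG) (fun x hx => hfF x (Finset.mem_of_mem_erase hx)) (fun x hx => (hder x hx).2)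
    hL hy
  exact pow_le_of_mul_pow_le_of_le_add hn ha haA hd hdL ((abs_nonneg _).trans (hfF x₀ hx₀))
    hpos hlow hup

end Interpolation

theorem exists_finset_card_eq_pairwise_le_dist {X : Type*} [PseudoMetricSpace X]
    [MeasurableSpace X] (μ : Measure X) {E : Set X} {d : ℝ} (hd : 0 < d) {V : ℝ≥0∞}
    (hV : ∀ x, μ (Metric.ball x d) ≤ V) {n : ℕ} (hE : n * V < μ E) :
    ∃ F : Finset X, ↑F ⊆ E ∧ F.card = n + 1 ∧ (F : Set X).Pairwise fun x y => d ≤ dist x y := by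
  classical
  suffices ∀ k ≤ n + 1, ∃ F : Finset X, ↑F ⊆ E ∧ F.card = k ∧
      (F : Set X).Pairwise fun x y => d ≤ dist x y from this _ le_rfl
  intro k
  induction k with
  | zero => exact fun _ => ⟨∅, by simp, rfl, by simp⟩
  | succ k ih =>
    intro hk
    obtain ⟨F, hFE, hFk, hF⟩ := ih (by omega)
    have hcover : μ (⋃ x ∈ F, Metric.ball x d) < μ E :=
      calc μ (⋃ x ∈ F, Metric.ball x d) ≤ ∑ x ∈ F, μ (Metric.ball x d) :=
            measure_biUnion_finset_le F _
        _ ≤ F.card • V := Finset.sum_le_card_nsmul _ _ _ fun x _ => hV x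
        _ ≤ n * V := by rw [nsmul_eq_mul, hFk]; gcongr; exact_mod_cast (by omega : k ≤ n)
        _ < μ E := hE
    obtain ⟨e, heE, he⟩ := sdiff_nonempty.2 fun h => (measure_mono h).not_gt hcover
    simp only [mem_iUnion, Metric.mem_ball, not_exists, not_lt] at he
    have heF : e ∉ F := fun h => by linarith [he e h, dist_self e]
    refine ⟨insert e F, by simpa [insert_subset_iff] using ⟨heE, hFE⟩,
      by rw [Finset.card_insert_of_notMem heF, hFk], ?_⟩
    rw [Finset.coe_insert, pairwise_insert]
    exact ⟨hF, fun x hx _ => ⟨he x hx, dist_comm e x ▸ he x hx⟩⟩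

theorem toReal_volume_sublevel_le {ℓ : ℕ} (hℓ : 1 ≤ ℓ) {a A : ℝ} (ha : 0 < a) (haA : a ≤ A)
    {b₁ b₂ : ℝ} (hb : b₁ < b₂) {f : ℝ → ℝ} (hf : ContDiffOn ℝ ℓ f (Icc b₁ b₂))
    (hder : ∀ x ∈ Icc b₁ b₂, a ≤ |iteratedDerivWithin ℓ f (Icc b₁ b₂) x| ∧
      |iteratedDerivWithin ℓ f (Icc b₁ b₂) x| ≤ A)
    {ε : ℝ} (hε : 0 < ε) {y : ℝ} (hy : y ∈ Icc b₁ b₂) (hymax : ∀ x ∈ Icc b₁ b₂, |f x| ≤ |f y|) :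
    (volume {x ∈ Icc b₁ b₂ | |f x| < ε}).toReal ≤
      ℓ * 12 * (A / a) ^ ((1 : ℝ) / ℓ) * (ε / |f y|) ^ ((1 : ℝ) / ℓ) * (b₂ - b₁) := by
  set E := {x ∈ Icc b₁ b₂ | |f x| < ε}
  set m := (volume E).toReal
  have hA : 0 < A := ha.trans_le haA
  have hRHS : 0 ≤ (A / a) ^ ((1 : ℝ) / ℓ) * (ε / |f y|) ^ ((1 : ℝ) / ℓ) * (b₂ - b₁) :=
    mul_nonneg (by positivity) (sub_nonneg.2 hb.le)
  have hEfin : volume E ≠ ⊤ := measure_ne_top_of_subset (sep_subset _ _) (by simp)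
  rcases (ENNReal.toReal_nonneg : 0 ≤ m).eq_or_lt with hm | hm
  · change 0 = m at hm
    rw [← hm]; positivity
  set d := m / (2 * ℓ + 2)
  have hd : 0 < d := by positivity
  have hmd : m = (2 * ℓ + 2) * d := by simp only [d]; field_simp
  have hvol : ℓ * ENNReal.ofReal (2 * d) < volume E := by
    rw [← ENNReal.ofReal_toReal hEfin, ← ENNReal.ofReal_natCast,
      ← ENNReal.ofReal_mul (by positivity), ENNReal.ofReal_lt_ofReal_iff hm]
    change _ < m
    rw [hmd]; nlinarith
  obtain ⟨F, hFE, hF, hsep⟩ := exists_finset_card_eq_pairwise_le_dist volume hd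
    (fun x => (Real.volume_ball x d).le) hvol
  have hL (x : ℝ) (hx : x ∈ Icc b₁ b₂) (y : ℝ) (hy : y ∈ Icc b₁ b₂) : |x - y| ≤ b₂ - b₁ := by
    rw [abs_le]; constructor <;> linarith [hx.1, hx.2, hy.1, hy.2]
  have hpow := pow_le_of_pairwise_le_dist (uniqueDiffOn_Icc hb) ordConnected_Icc hf (by omega) hF
    (hFE.trans (sep_subset _ _)) ha haA hd hsep (fun x hx => (hFE hx).2.le) hder hL hy hymax
  have hdle := le_three_mul_rpow_mul_of_pow_le (by omega) (by positivity) (sub_nonneg.2 hb.le) hpow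
  rw [Real.mul_rpow (by positivity) (by positivity)] at hdle
  have hℓ' : (1 : ℝ) ≤ ℓ := by exact_mod_cast hℓ
  calc m = (2 * ℓ + 2) * d := hmd
    _ ≤ (2 * ℓ + 2) * (3 * ((A / a) ^ ((1 : ℝ) / ℓ) * (ε / |f y|) ^ ((1 : ℝ) / ℓ)) * (b₂ - b₁)) := by
        gcongr
    _ ≤ _ := by nlinarith

/-- **One-dimensional `(C, α)`-good lemma** (Lemma 4.1 of Kleinbock–Weiss): there is an
absolute constant `C₁` such that if `f ∈ C^ℓ(B)` on an interval `B` with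
`a ≤ |f^{(ℓ)}| ≤ A` on `B` (`0 < a ≤ A`), then for all `ε > 0`,
`λ({x ∈ B : |f(x)| < ε}) ≤ ℓ C₁ (A/a)^{1/ℓ} (ε/‖f‖_{λ,B})^{1/ℓ} λ(B)`. -/
theorem one_dim_good_lemma :
    ∃ C₁ > (0:ℝ), ∀ (ℓ : ℕ), 1 ≤ ℓ → ∀ (a A : ℝ), 0 < a → a ≤ A →
      ∀ (b₁ b₂ : ℝ), b₁ < b₂ → ∀ f : ℝ → ℝ,
        ContDiffOn ℝ ℓ f (Set.Icc b₁ b₂) →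
        (∀ x ∈ Set.Icc b₁ b₂,
          a ≤ |iteratedDerivWithin ℓ f (Set.Icc b₁ b₂) x| ∧
          |iteratedDerivWithin ℓ f (Set.Icc b₁ b₂) x| ≤ A) →
        ∀ ε > (0:ℝ),
          volume {x ∈ Set.Icc b₁ b₂ | |f x| < ε} ≤
            ENNReal.ofReal ((ℓ : ℝ) * C₁ * (A / a) ^ ((1:ℝ)/ℓ) *
              (ε / sSup ((fun x => |f x|) '' Set.Icc b₁ b₂)) ^ ((1:ℝ)/ℓ)) *
            volume (Set.Icc b₁ b₂) := by
  refine ⟨12, by norm_num, fun ℓ hℓ a A ha haA b₁ b₂ hb f hf hder ε hε => ?_⟩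
  obtain ⟨y, hy, hymax⟩ :=
    isCompact_Icc.exists_isMaxOn (nonempty_Icc.2 hb.le) hf.continuousOn.abs
  have hsup : sSup ((fun x => |f x|) '' Icc b₁ b₂) = |f y| :=
    IsGreatest.csSup_eq ⟨mem_image_of_mem _ hy, forall_mem_image.2 hymax⟩
  have hfin : volume {x ∈ Icc b₁ b₂ | |f x| < ε} ≠ ⊤ :=
    measure_ne_top_of_subset (sep_subset _ _) (by simp [Real.volume_Icc])
  have hA : 0 < A := ha.trans_le haA
  rw [hsup, Real.volume_Icc, ← ENNReal.ofReal_mul (by positivity), ← ENNReal.ofReal_toReal hfin]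
  exact ENNReal.ofReal_le_ofReal (toReal_volume_sublevel_le hℓ ha haA hb hf hder hε hy hymax)
end

section
/- Let m = 2, n = 1, k = 3. Fix ε with 0 < ε < 1 and u > 0. Let Λ ⊂ ℝ³ be a unimodular lattice containing the vector e^u·e₁ as a primitive vector, and suppose e^u < 2ε and e^u·ε² > 1. Then Λ contains a nonzero vector of sup-norm less than ε; in particular Λ ∉ K_ε. -/
open MeasureTheory
open scoped ENNReal

/-- Minkowski step: a unimodular lattice `g ℤ³` contains a nonzero vector in the open box
`(-a₀, a₀) × (-a₁, a₁) × (-a₂, a₂)` as soon as the box has volume `> 8`. -/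
lemma aux_minkowski (g : Matrix (Fin 3) (Fin 3) ℝ) (hg : |g.det| = 1)
    (c : Fin 3 → ℝ) (hc : ∀ i, 0 < c i) (hvol : 8 < (2 * c 0) * ((2 * c 1) * (2 * c 2))) :
    ∃ w : Fin 3 → ℤ, w ≠ 0 ∧ ∀ i, |g.mulVec (fun i => (w i : ℝ)) i| < c i := by
  have hdet : g.det ≠ 0 := by
    intro h; rw [h] at hg; simp at hg
  have hinv : Invertible g := g.invertibleOfIsUnitDet (isUnit_iff_ne_zero.mpr hdet)
  set e : (Fin 3 → ℝ) ≃ₗ[ℝ] (Fin 3 → ℝ) := g.toLinearEquiv' hinv with he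
  set b : Module.Basis (Fin 3) ℝ (Fin 3 → ℝ) := (Pi.basisFun ℝ (Fin 3)).map e with hb
  have hbi : ∀ i j, b i j = g j i := by
    intro i j
    show (g.toLinearEquiv' hinv) ((Pi.basisFun ℝ (Fin 3)) i) j = g j i
    have h1 : (g.toLinearEquiv' hinv) ((Pi.basisFun ℝ (Fin 3)) i) =
        Matrix.toLin' g ((Pi.basisFun ℝ (Fin 3)) i) := rfl
    rw [h1, Matrix.toLin'_apply]
    simp [Matrix.mulVec, dotProduct, Pi.single_apply]
  set s : Set (Fin 3 → ℝ) := Set.univ.pi fun i => Set.Ioo (-(c i)) (c i) with hs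
  have hfund := ZSpan.isAddFundamentalDomain' b (volume : Measure (Fin 3 → ℝ))
  have hFvol : volume (ZSpan.fundamentalDomain b) = 1 := by
    rw [ZSpan.volume_fundamentalDomain b]
    have : (Matrix.of b).det = g.det := by
      rw [← Matrix.det_transpose (Matrix.of b)]
      congr 1
      ext j i
      exact hbi i j
    rw [this, hg, ENNReal.ofReal_one]
  have hsvol : volume s = ENNReal.ofReal ((2 * c 0) * ((2 * c 1) * (2 * c 2))) := by
    rw [hs, volume_pi_pi]
    simp only [Real.volume_Ioo, sub_neg_eq_add]
    rw [Fin.prod_univ_three]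
    rw [← ENNReal.ofReal_mul (by linarith [hc 0] : (0:ℝ) ≤ c 0 + c 0),
      ← ENNReal.ofReal_mul (by nlinarith [hc 0, hc 1])]
    congr 1
    ring
  have hlt : volume (ZSpan.fundamentalDomain b) * 2 ^ Module.finrank ℝ (Fin 3 → ℝ) < volume s := by
    rw [hFvol, hsvol, one_mul, Module.finrank_fintype_fun_eq_card, Fintype.card_fin]
    have h8 : ((2 : ℝ≥0∞) ^ 3) = ENNReal.ofReal 8 := by
      rw [show (ENNReal.ofReal 8) = ((8 : ℝ≥0∞)) by norm_num]
      norm_num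
    rw [h8]
    exact (ENNReal.ofReal_lt_ofReal_iff (by linarith)).mpr hvol
  have h_symm : ∀ x ∈ s, -x ∈ s := by
    intro x hx i _
    obtain ⟨ha, hb⟩ := hx i (Set.mem_univ i)
    simp only [Pi.neg_apply, Set.mem_Ioo]
    constructor <;> linarith
  have h_conv : Convex ℝ s := convex_pi fun i _ => convex_Ioo _ _
  haveI : Countable (Submodule.span ℤ (Set.range ⇑b)).toAddSubgroup :=
    inferInstanceAs (Countable (Submodule.span ℤ (Set.range ⇑b)))
  obtain ⟨x, hx0, hxs⟩ :=
    exists_ne_zero_mem_lattice_of_measure_mul_two_pow_lt_measure hfund h_symm h_conv hlt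
  have hxmem : (x : Fin 3 → ℝ) ∈ Submodule.span ℤ (Set.range b) := x.2
  rw [b.mem_span_iff_repr_mem ℤ] at hxmem
  choose w hw using hxmem
  refine ⟨w, ?_, ?_⟩
  · intro hwz
    apply hx0
    have hrep : ∀ i, b.repr (x : Fin 3 → ℝ) i = 0 := by
      intro i
      rw [← hw i, hwz]
      simp
    have hx0' : (x : Fin 3 → ℝ) = 0 := by
      apply b.repr.injective
      ext i
      simp [hrep i]
    exact Subtype.ext hx0'
  · have hxe : g.mulVec (fun i => (w i : ℝ)) = (x : Fin 3 → ℝ) := by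
      conv_rhs => rw [← b.sum_repr (x : Fin 3 → ℝ)]
      funext j
      rw [Finset.sum_apply]
      simp only [Matrix.mulVec, dotProduct]
      refine Finset.sum_congr rfl fun i _ => ?_
      rw [← hw i]
      simp only [Pi.smul_apply, smul_eq_mul, hbi]
      norm_num [algebraMap_int_eq]
      ring
    intro i
    rw [hxe]
    have := hxs i (Set.mem_univ i)
    rw [abs_lt]
    exact ⟨this.1, this.2⟩

/-- **Counterexample construction** (Kleinbock–Weiss §4.4, case `m = 2`, `n = 1`): let
`Λ = g ℤ³` be a unimodular lattice in `ℝ³` containing `e^u e₁` as a primitive vector,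
and suppose `e^u < 2ε` and `e^u ε² > 1`. Then `Λ` contains a nonzero vector of
sup-norm less than `ε`; in particular `Λ ∉ K_ε`. -/
theorem lattice_with_primitive_short_vector (ε u : ℝ) (hε0 : 0 < ε) (hε1 : ε < 1)
    (g : Matrix (Fin 3) (Fin 3) ℝ) (hg : |g.det| = 1)
    (z : Fin 3 → ℤ) (hprim : Finset.univ.gcd z = 1)
    (hz : g.mulVec (fun i => (z i : ℝ)) = fun i => if i = 0 then Real.exp u else 0)
    (hu1 : Real.exp u < 2 * ε) (hu2 : 1 < Real.exp u * ε ^ 2) :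
    ∃ w : Fin 3 → ℤ, w ≠ 0 ∧ ‖g.mulVec (fun i => (w i : ℝ))‖ < ε := by
  have heu : 0 < Real.exp u := Real.exp_pos u
  obtain ⟨w, hw0, hwlt⟩ := aux_minkowski g hg ![Real.exp u, ε, ε]
    (by intro i; fin_cases i <;> simp [heu, hε0])
    (by simp only [Matrix.cons_val_zero, Matrix.cons_val_one, Matrix.head_cons,
      Matrix.cons_val_two, Matrix.tail_cons]; nlinarith)
  set v := g.mulVec (fun i => (w i : ℝ)) with hv
  have h0 : |v 0| < Real.exp u := by simpa using hwlt 0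
  have h1 : |v 1| < ε := by simpa using hwlt 1
  have h2 : |v 2| < ε := by simpa using hwlt 2
  by_cases hcase : |v 0| < ε
  · refine ⟨w, hw0, ?_⟩
    rw [pi_norm_lt_iff hε0]
    intro i
    rw [Real.norm_eq_abs]
    fin_cases i
    · exact hcase
    · exact h1
    · exact h2
  · push_neg at hcase
    rcases le_or_gt 0 (v 0) with hsgn | hsgn
    · have hε' : ε ≤ v 0 := by rwa [abs_of_nonneg hsgn] at hcase
      have hv0 : v 0 < Real.exp u := by rwa [abs_of_nonneg hsgn] at h0
      refine ⟨w - z, ?_, ?_⟩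
      · intro h
        have hwz : w = z := by rwa [sub_eq_zero] at h
        rw [hwz] at hv
        have hveq : v 0 = Real.exp u := by rw [hv, hz]; simp
        rw [hveq] at hv0
        exact lt_irrefl _ hv0
      · have hcoe : (fun i => ((w - z) i : ℝ)) =
            (fun i => (w i : ℝ)) - (fun i => (z i : ℝ)) := by
          funext i; push_cast [Pi.sub_apply]; ring
        have hmv : g.mulVec (fun i => ((w - z) i : ℝ)) =
            v - (fun i => if i = 0 then Real.exp u else 0) := by
          rw [hcoe, Matrix.mulVec_sub, hz, hv]
        rw [hmv, pi_norm_lt_iff hε0]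
        intro i
        simp only [Pi.sub_apply, Real.norm_eq_abs]
        by_cases hi : i = 0
        · subst hi
          rw [if_pos rfl, abs_lt]
          constructor <;> linarith
        · rw [if_neg hi, sub_zero]
          fin_cases i
          · exact absurd rfl hi
          · exact h1
          · exact h2
    · have hε' : v 0 ≤ -ε := by rw [abs_of_neg hsgn] at hcase; linarith
      have hv0 : -Real.exp u < v 0 := by rw [abs_of_neg hsgn] at h0; linarith
      refine ⟨w + z, ?_, ?_⟩
      · intro h
        have hwz : w = -z := by rwa [add_eq_zero_iff_eq_neg] at h
        rw [hwz] at hv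
        have hcoe : (fun i => ((-z) i : ℝ)) = -(fun i => (z i : ℝ)) := by
          funext i; push_cast [Pi.neg_apply]; ring
        rw [hcoe, Matrix.mulVec_neg, hz] at hv
        have hveq : v 0 = -Real.exp u := by rw [hv]; simp
        rw [hveq] at hv0
        exact lt_irrefl _ hv0
      · have hcoe : (fun i => ((w + z) i : ℝ)) =
            (fun i => (w i : ℝ)) + (fun i => (z i : ℝ)) := by
          funext i; push_cast [Pi.add_apply]; ring
        have hmv : g.mulVec (fun i => ((w + z) i : ℝ)) =
            v + (fun i => if i = 0 then Real.exp u else 0) := by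
          rw [hcoe, Matrix.mulVec_add, hz, hv]
        rw [hmv, pi_norm_lt_iff hε0]
        intro i
        simp only [Pi.add_apply, Real.norm_eq_abs]
        by_cases hi : i = 0
        · subst hi
          rw [if_pos rfl, abs_lt]
          constructor <;> linarith
        · rw [if_neg hi, add_zero]
          fin_cases i
          · exact absurd rfl hi
          · exact h1
          · exact h2
end
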